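/- arXiv:2408.08728 — 8 statements merged into one kernel-verified Lean document; each statement's English description precedes it below -/
import Mathlib

section
/- Let λ > 0, η > 0, c > 0 and t₀ ∈ ℝ, and let V : ℝ → ℝ be a smooth function satisfying |V(t) + λ²| ≤ c·exp(η·t) for all t < t₀. Then there exists a twice continuously differentiable function w : ℝ → ℝ satisfying w''(t) + V(t)·w(t) = 0 for all t ∈ ℝ, such that w(t)·exp(−λ·t) → 1 and w'(t)·exp(−λ·t) → λ as t → −∞. -/
/-!
With `q = -(V + λ²)` and `w = e^{λt} u` the equation becomes `u'' + 2λu' = q u`, whose solutions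
with `u(-∞) = 1`, `u'(-∞) = 0` are the fixed points of the Volterra operator
`u ↦ 1 + ∫_{-∞}^t (1 - e^{-2λ(t-s)}) / (2λ) · q(s) u(s) ds`; the exponential bound on `V + λ²` is
only used to make `q` integrable on every half-line `(-∞, t]`. For the weight
`E(t) = exp (∫_{-∞}^t |q| / λ)` one has `∫_{-∞}^t |q| E = λ (E(t) - 1)`, which makes the operator a
`1/2`-contraction for the weighted norm `sup |u| / E` on the whole line. Its fixed point `u`
satisfies `|u - 1| ≤ C (E - 1) → 0` at `-∞`, and likewise for `u'`.
-/

open MeasureTheory Set Filter Real Topology BoundedContinuousFunction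

namespace AsymptoticODE

section IntegralIic

variable {g : ℝ → ℝ}

lemma integrableOn_Iic_of_continuous (hg : Continuous g) {a : ℝ}
    (ha : IntegrableOn g (Iic a)) (b : ℝ) : IntegrableOn g (Iic b) := by
  refine (ha.union (hg.integrableOn_Icc (a := a) (b := b))).mono_set fun x hx => ?_
  rcases le_total x a with hxa | hax
  · exact Or.inl hxa
  · exact Or.inr ⟨hax, hx⟩

lemma tendsto_setIntegral_Iic_atBot (hint : ∀ t, IntegrableOn g (Iic t)) :
    Tendsto (fun t => ∫ s in Iic t, g s) atBot (𝓝 0) := by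
  have h := (intervalIntegral_tendsto_integral_Iic 0 (hint 0) tendsto_id).const_sub
    (∫ s in Iic 0, g s)
  rw [sub_self] at h
  refine h.congr fun t => ?_
  rw [id, ← intervalIntegral.integral_Iic_sub_Iic (hint t) (hint 0), sub_sub_cancel]

lemma hasDerivAt_setIntegral_Iic (hg : Continuous g) (hint : ∀ t, IntegrableOn g (Iic t))
    (t : ℝ) : HasDerivAt (fun x => ∫ s in Iic x, g s) (g t) t := by
  have hsplit : (fun x => ∫ s in Iic x, g s) = fun x => (∫ s in Iic t, g s) + ∫ s in t..x, g s :=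
    funext fun x => by rw [← intervalIntegral.integral_Iic_sub_Iic (hint t) (hint x)]; ring
  rw [hsplit]
  exact (intervalIntegral.integral_hasDerivAt_right (hg.intervalIntegrable _ _)
    hg.stronglyMeasurable.stronglyMeasurableAtFilter hg.continuousAt).const_add _

lemma integrableOn_Iic_of_abs_le_exp (hg : Continuous g) {c η t₀ : ℝ} (hη : 0 < η)
    (hb : ∀ t < t₀, |g t| ≤ c * exp (η * t)) (t : ℝ) : IntegrableOn g (Iic t) := by
  refine integrableOn_Iic_of_continuous hg (a := t₀ - 1) ?_ t
  refine Integrable.mono' ((integrableOn_exp_mul_Iic hη _).const_mul c)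
    hg.aestronglyMeasurable.restrict ?_
  refine ae_restrict_of_forall_mem measurableSet_Iic fun s hs => ?_
  exact hb s (by linarith [mem_Iic.1 hs])

noncomputable def dampedIntegral (a : ℝ) (g : ℝ → ℝ) (t : ℝ) : ℝ :=
  ∫ s in Iic t, exp (a * (s - t)) * g s

lemma integrableOn_exp_mul_sub_mul {a : ℝ} (ha : 0 ≤ a) {t : ℝ}
    (hint : IntegrableOn g (Iic t)) : IntegrableOn (fun s => exp (a * (s - t)) * g s) (Iic t) := by
  refine hint.bdd_mul (c := 1) (by fun_prop) ?_
  refine ae_restrict_of_forall_mem measurableSet_Iic fun s hs => ?_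
  rw [norm_of_nonneg (exp_pos _).le, exp_le_one_iff]
  exact mul_nonpos_of_nonneg_of_nonpos ha (sub_nonpos.2 hs)

lemma dampedIntegral_eq {a : ℝ} (g : ℝ → ℝ) (t : ℝ) :
    dampedIntegral a g t = exp (-a * t) * ∫ s in Iic t, exp (a * s) * g s := by
  rw [dampedIntegral, ← integral_const_mul]
  congr 1 with s
  rw [← mul_assoc, ← exp_add]
  ring_nf

lemma hasDerivAt_dampedIntegral {a : ℝ} (ha : 0 ≤ a) (hg : Continuous g)
    (hint : ∀ t, IntegrableOn g (Iic t)) (t : ℝ) :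
    HasDerivAt (dampedIntegral a g) (-a * dampedIntegral a g t + g t) t := by
  have hint' : ∀ x, IntegrableOn (fun s => exp (a * s) * g s) (Iic x) := fun x => by
    refine IntegrableOn.congr_fun ((integrableOn_exp_mul_sub_mul ha (hint x)).const_mul
      (exp (a * x))) (fun s _ => ?_) measurableSet_Iic
    rw [← mul_assoc, ← exp_add]
    ring_nf
  have h := ((hasDerivAt_id t).const_mul (-a)).exp.mul
    (hasDerivAt_setIntegral_Iic (by fun_prop) hint' t)
  rw [funext (dampedIntegral_eq (a := a) g)]
  refine h.congr_deriv ?_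
  rw [id, ← mul_assoc (exp (-a * t)) (exp (a * t)), ← exp_add, show -a * t + a * t = 0 by ring,
    exp_zero]
  ring

end IntegralIic

section Weight

variable {lam : ℝ} {q : ℝ → ℝ}

noncomputable def weight (lam : ℝ) (q : ℝ → ℝ) (t : ℝ) : ℝ := exp ((∫ s in Iic t, |q s|) / lam)

lemma weight_pos (t : ℝ) : 0 < weight lam q t := exp_pos _

lemma one_le_weight (hlam : 0 ≤ lam) (t : ℝ) : 1 ≤ weight lam q t :=
  one_le_exp (div_nonneg (setIntegral_nonneg measurableSet_Iic fun _ _ => abs_nonneg _) hlam)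

lemma monotone_weight (hlam : 0 ≤ lam) (hint : ∀ t, IntegrableOn q (Iic t)) :
    Monotone (weight lam q) := fun a b hab => by
  refine exp_le_exp.2 (div_le_div_of_nonneg_right ?_ hlam)
  exact setIntegral_mono_set (hint b).abs (.of_forall fun _ => abs_nonneg _)
    (Iic_subset_Iic.2 hab).eventuallyLE

lemma hasDerivAt_weight (hq : Continuous q) (hint : ∀ t, IntegrableOn q (Iic t)) (t : ℝ) :
    HasDerivAt (weight lam q) (|q t| * weight lam q t / lam) t := by
  refine ((hasDerivAt_setIntegral_Iic hq.abs (fun x => (hint x).abs) t).div_const lam).exp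
    |>.congr_deriv ?_
  rw [weight]
  ring

lemma continuous_weight (hq : Continuous q) (hint : ∀ t, IntegrableOn q (Iic t)) :
    Continuous (weight lam q) :=
  continuous_iff_continuousAt.2 fun t => (hasDerivAt_weight hq hint t).continuousAt

lemma tendsto_weight_atBot (hint : ∀ t, IntegrableOn q (Iic t)) :
    Tendsto (weight lam q) atBot (𝓝 1) := by
  have h := (tendsto_setIntegral_Iic_atBot fun t => (hint t).abs).div_const lam
  rw [zero_div] at h
  have h' := (continuous_exp.tendsto 0).comp h
  rwa [exp_zero] at h'

lemma integrableOn_abs_mul_weight (hlam : 0 ≤ lam) (hint : ∀ t, IntegrableOn q (Iic t))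
    (t : ℝ) : IntegrableOn (fun s => |q s| * weight lam q s) (Iic t) := by
  refine (hint t).abs.mul_bdd (c := weight lam q t) ?_ ?_
  · exact (monotone_weight hlam hint).measurable.aestronglyMeasurable
  refine ae_restrict_of_forall_mem measurableSet_Iic fun s hs => ?_
  rw [norm_of_nonneg (weight_pos s).le]
  exact monotone_weight hlam hint hs

lemma setIntegral_abs_mul_weight (hlam : 0 < lam) (hq : Continuous q)
    (hint : ∀ t, IntegrableOn q (Iic t)) (t : ℝ) :
    ∫ s in Iic t, |q s| * weight lam q s = lam * (weight lam q t - 1) := by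
  have hderiv : ∀ s, HasDerivAt (fun x => lam * weight lam q x) (|q s| * weight lam q s) s :=
    fun s => ((hasDerivAt_weight hq hint s).const_mul lam).congr_deriv (by field_simp)
  rw [integral_Iic_of_hasDerivAt_of_tendsto' (fun s _ => hderiv s)
    (integrableOn_abs_mul_weight hlam.le hint t) ((tendsto_weight_atBot hint).const_mul lam)]
  ring

end Weight

section Volterra

variable {lam : ℝ} {q U : ℝ → ℝ} {M : ℝ}

lemma nonneg_of_abs_le_mul_weight (hUM : ∀ s, |U s| ≤ M * weight lam q s) : 0 ≤ M :=
  nonneg_of_mul_nonneg_left ((abs_nonneg _).trans (hUM 0)) (weight_pos 0)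

lemma integrableOn_mul_of_abs_le_weight (hlam : 0 ≤ lam) (hint : ∀ t, IntegrableOn q (Iic t))
    (hU : Continuous U) (hUM : ∀ s, |U s| ≤ M * weight lam q s) (t : ℝ) :
    IntegrableOn (fun s => q s * U s) (Iic t) := by
  refine (hint t).mul_bdd (c := M * weight lam q t) hU.aestronglyMeasurable ?_
  refine ae_restrict_of_forall_mem measurableSet_Iic fun s hs => (hUM s).trans ?_
  exact mul_le_mul_of_nonneg_left (monotone_weight hlam hint hs)
    (nonneg_of_abs_le_mul_weight hUM)

lemma abs_setIntegral_mul_le (hlam : 0 < lam) (hq : Continuous q)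
    (hint : ∀ t, IntegrableOn q (Iic t)) (hUM : ∀ s, |U s| ≤ M * weight lam q s)
    {k : ℝ → ℝ} {C t : ℝ} (hk : ∀ s ≤ t, |k s| ≤ C) :
    |∫ s in Iic t, k s * (q s * U s)| ≤ C * M * (lam * (weight lam q t - 1)) := by
  have hbound : ∀ s ∈ Iic t, ‖k s * (q s * U s)‖ ≤ C * M * (|q s| * weight lam q s) := by
    intro s hs
    rw [norm_mul, norm_mul, norm_eq_abs, norm_eq_abs, norm_eq_abs]
    calc |k s| * (|q s| * |U s|) ≤ C * (|q s| * (M * weight lam q s)) :=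
          mul_le_mul (hk s hs) (mul_le_mul_of_nonneg_left (hUM s) (abs_nonneg _))
            (by positivity) ((abs_nonneg _).trans (hk s hs))
      _ = C * M * (|q s| * weight lam q s) := by ring
  calc |∫ s in Iic t, k s * (q s * U s)|
      ≤ ∫ s in Iic t, C * M * (|q s| * weight lam q s) :=
        norm_integral_le_of_norm_le ((integrableOn_abs_mul_weight hlam.le hint t).const_mul _)
          (ae_restrict_of_forall_mem measurableSet_Iic hbound)
    _ = C * M * (lam * (weight lam q t - 1)) := by
        rw [integral_const_mul, setIntegral_abs_mul_weight hlam hq hint]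

/-- Green's function of `u'' + 2λu'` vanishing with its derivative at `-∞`. -/
noncomputable def greenKernel (lam t s : ℝ) : ℝ := (1 - exp (2 * lam * (s - t))) / (2 * lam)

lemma abs_greenKernel_le (hlam : 0 < lam) {s t : ℝ} (hst : s ≤ t) :
    |greenKernel lam t s| ≤ 1 / (2 * lam) := by
  have hexp : exp (2 * lam * (s - t)) ≤ 1 :=
    exp_le_one_iff.2 (mul_nonpos_of_nonneg_of_nonpos (by positivity) (sub_nonpos.2 hst))
  rw [greenKernel, abs_div, abs_of_pos (by positivity : 0 < 2 * lam),
    abs_of_nonneg (sub_nonneg.2 hexp)]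
  gcongr
  linarith [exp_pos (2 * lam * (s - t))]

noncomputable def volterra (lam : ℝ) (q U : ℝ → ℝ) (t : ℝ) : ℝ :=
  1 + ∫ s in Iic t, greenKernel lam t s * (q s * U s)

lemma integrableOn_greenKernel_mul (hlam : 0 < lam) (hint : ∀ t, IntegrableOn q (Iic t))
    (hU : Continuous U) (hUM : ∀ s, |U s| ≤ M * weight lam q s) (t : ℝ) :
    IntegrableOn (fun s => greenKernel lam t s * (q s * U s)) (Iic t) := by
  refine (integrableOn_mul_of_abs_le_weight hlam.le hint hU hUM t).bdd_mul
    (c := 1 / (2 * lam)) (by unfold greenKernel; fun_prop) ?_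
  exact ae_restrict_of_forall_mem measurableSet_Iic fun s hs => abs_greenKernel_le hlam hs

lemma abs_volterra_sub_one_le (hlam : 0 < lam) (hq : Continuous q)
    (hint : ∀ t, IntegrableOn q (Iic t)) (hUM : ∀ s, |U s| ≤ M * weight lam q s) (t : ℝ) :
    |volterra lam q U t - 1| ≤ M / 2 * (weight lam q t - 1) := by
  have h := abs_setIntegral_mul_le hlam hq hint hUM (t := t) fun s hs => abs_greenKernel_le hlam hs
  rw [volterra, add_sub_cancel_left]
  convert h using 1
  field_simp

lemma abs_volterra_le (hlam : 0 < lam) (hq : Continuous q)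
    (hint : ∀ t, IntegrableOn q (Iic t)) (hUM : ∀ s, |U s| ≤ M * weight lam q s) (t : ℝ) :
    |volterra lam q U t| ≤ (1 + M / 2) * weight lam q t := by
  have h := abs_volterra_sub_one_le hlam hq hint hUM t
  have hM := nonneg_of_abs_le_mul_weight hUM
  have hw := one_le_weight (q := q) hlam.le t
  calc |volterra lam q U t| ≤ |volterra lam q U t - 1| + 1 := by
        simpa using abs_add_le (volterra lam q U t - 1) 1
    _ ≤ (1 + M / 2) * weight lam q t := by nlinarith

lemma abs_volterra_sub_volterra_le (hlam : 0 < lam) (hq : Continuous q)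
    (hint : ∀ t, IntegrableOn q (Iic t)) {U' : ℝ → ℝ} {M' d : ℝ}
    (hU : Continuous U) (hUM : ∀ s, |U s| ≤ M * weight lam q s)
    (hU' : Continuous U') (hUM' : ∀ s, |U' s| ≤ M' * weight lam q s)
    (hd : ∀ s, |U s - U' s| ≤ d * weight lam q s) (t : ℝ) :
    |volterra lam q U t - volterra lam q U' t| ≤ d / 2 * weight lam q t := by
  have hsub : volterra lam q U t - volterra lam q U' t
      = volterra lam q (fun s => U s - U' s) t - 1 := by
    rw [volterra, volterra, volterra, add_sub_add_left_eq_sub, add_sub_cancel_left,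
      ← integral_sub (integrableOn_greenKernel_mul hlam hint hU hUM t)
        (integrableOn_greenKernel_mul hlam hint hU' hUM' t)]
    simp only [mul_sub]
  rw [hsub]
  refine (abs_volterra_sub_one_le hlam hq hint hd t).trans ?_
  have := nonneg_of_abs_le_mul_weight hd
  nlinarith [weight_pos (lam := lam) (q := q) t]

lemma volterra_eq (hlam : 0 < lam) (hint : ∀ t, IntegrableOn q (Iic t))
    (hU : Continuous U) (hUM : ∀ s, |U s| ≤ M * weight lam q s) (t : ℝ) :
    volterra lam q U t = 1 + ((∫ s in Iic t, q s * U s)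
      - dampedIntegral (2 * lam) (fun s => q s * U s) t) / (2 * lam) := by
  have hqU := integrableOn_mul_of_abs_le_weight hlam.le hint hU hUM t
  rw [volterra, dampedIntegral, ← integral_sub hqU
    (integrableOn_exp_mul_sub_mul (by positivity) hqU), ← integral_div]
  congr 2 with s
  rw [greenKernel]
  ring

lemma hasDerivAt_volterra (hlam : 0 < lam) (hq : Continuous q)
    (hint : ∀ t, IntegrableOn q (Iic t))
    (hU : Continuous U) (hUM : ∀ s, |U s| ≤ M * weight lam q s) (t : ℝ) :
    HasDerivAt (volterra lam q U) (dampedIntegral (2 * lam) (fun s => q s * U s) t) t := by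
  have hqU := integrableOn_mul_of_abs_le_weight hlam.le hint hU hUM
  have hcont : Continuous fun s => q s * U s := hq.mul hU
  rw [funext (volterra_eq hlam hint hU hUM)]
  refine (((hasDerivAt_setIntegral_Iic hcont hqU t).sub
    (hasDerivAt_dampedIntegral (by positivity) hcont hqU t)).div_const _).const_add 1
    |>.congr_deriv ?_
  field_simp
  ring

end Volterra

section FixedPoint

variable {lam : ℝ} {q : ℝ → ℝ}

/-- `v ↦ v · weight` identifies `ℝ →ᵇ ℝ` with the weighted space `|U| ≤ M · weight`. -/
lemma exists_volterra_fixedPoint (hlam : 0 < lam) (hq : Continuous q)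
    (hint : ∀ t, IntegrableOn q (Iic t)) :
    ∃ u : ℝ → ℝ, ∃ M : ℝ, Continuous u ∧ (∀ t, |u t| ≤ M * weight lam q t) ∧
      volterra lam q u = u := by
  set E := weight lam q
  have hEc : Continuous E := continuous_weight hq hint
  have hvc : ∀ v : ℝ →ᵇ ℝ, Continuous fun s => v s * E s := fun v => v.continuous.mul hEc
  have hvE : ∀ (v : ℝ →ᵇ ℝ) s, |v s * E s| ≤ ‖v‖ * E s := fun v s => by
    rw [abs_mul, abs_of_pos (weight_pos s)]
    exact mul_le_mul_of_nonneg_right (v.norm_coe_le_norm s) (weight_pos s).le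
  have hSc : ∀ v : ℝ →ᵇ ℝ, Continuous fun t => volterra lam q (fun s => v s * E s) t / E t :=
    fun v => .div (continuous_iff_continuousAt.2 fun t =>
      (hasDerivAt_volterra hlam hq hint (hvc v) (hvE v) t).continuousAt) hEc
      fun t => (weight_pos t).ne'
  let S : (ℝ →ᵇ ℝ) → (ℝ →ᵇ ℝ) := fun v =>
    .ofNormedAddCommGroup _ (hSc v) (1 + ‖v‖ / 2) fun t => by
      rw [norm_div, norm_eq_abs, norm_eq_abs, abs_of_pos (weight_pos t),
        div_le_iff₀ (weight_pos t)]
      exact abs_volterra_le hlam hq hint (hvE v) t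
  have hS : ContractingWith (1 / 2) S := by
    refine ⟨by rw [← NNReal.coe_lt_coe]; norm_num, LipschitzWith.of_dist_le_mul fun v v' => ?_⟩
    rw [BoundedContinuousFunction.dist_le (by positivity)]
    intro t
    have hd : ∀ s, |v s * E s - v' s * E s| ≤ dist v v' * E s := fun s => by
      rw [← sub_mul, abs_mul, abs_of_pos (weight_pos s), ← dist_eq]
      exact mul_le_mul_of_nonneg_right (v.dist_coe_le_dist s) (weight_pos s).le
    have h := abs_volterra_sub_volterra_le hlam hq hint (hvc v) (hvE v) (hvc v') (hvE v') hd t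
    change |_ / E t - _ / E t| ≤ _
    rw [← sub_div, abs_div, abs_of_pos (weight_pos t), div_le_iff₀ (weight_pos t)]
    refine h.trans_eq ?_
    push_cast
    ring
  set v := ContractingWith.fixedPoint S hS
  refine ⟨fun s => v s * E s, ‖v‖, hvc v, hvE v, funext fun t => ?_⟩
  have hv : S v t = v t := congrArg (· t) (ContractingWith.fixedPoint_isFixedPt hS)
  change volterra lam q (fun s => v s * E s) t / E t = v t at hv
  rw [← hv, div_mul_cancel₀ _ (weight_pos t).ne']

end FixedPoint

section Solution

variable {lam : ℝ} {q : ℝ → ℝ}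

theorem exists_dampedSystem_solution (hlam : 0 < lam) (hq : Continuous q)
    (hint : ∀ t, IntegrableOn q (Iic t)) :
    ∃ u J : ℝ → ℝ, (∀ t, HasDerivAt u (J t) t) ∧
      (∀ t, HasDerivAt J (-(2 * lam) * J t + q t * u t) t) ∧
      Tendsto u atBot (𝓝 1) ∧ Tendsto J atBot (𝓝 0) := by
  obtain ⟨u, M, hu, huM, hfix⟩ := exists_volterra_fixedPoint hlam hq hint
  have hqu := integrableOn_mul_of_abs_le_weight hlam.le hint hu huM
  have hE : Tendsto (fun t => weight lam q t - 1) atBot (𝓝 0) := by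
    simpa using (tendsto_weight_atBot hint).sub_const 1
  refine ⟨u, dampedIntegral (2 * lam) (fun s => q s * u s), fun t => ?_,
    hasDerivAt_dampedIntegral (by positivity) (hq.mul hu) hqu, ?_, ?_⟩
  · simpa only [hfix] using hasDerivAt_volterra hlam hq hint hu huM t
  · refine tendsto_sub_nhds_zero_iff.1 (squeeze_zero_norm (fun t => ?_)
      (by simpa using hE.const_mul (M / 2)))
    simpa only [hfix, norm_eq_abs] using abs_volterra_sub_one_le hlam hq hint huM t
  · refine squeeze_zero_norm (fun t => ?_) (by simpa using hE.const_mul (M * lam))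
    have h := abs_setIntegral_mul_le hlam hq hint huM (C := 1) (t := t)
      (k := fun s => exp (2 * lam * (s - t))) fun s hs => by
        rw [abs_of_pos (exp_pos _), exp_le_one_iff]
        exact mul_nonpos_of_nonneg_of_nonpos (by positivity) (sub_nonpos.2 hs)
    exact h.trans_eq (by ring)

theorem exists_solution_tendsto_mul_exp (hlam : 0 < lam) (hq : Continuous q)
    (hint : ∀ t, IntegrableOn q (Iic t)) :
    ∃ w w' : ℝ → ℝ, (∀ t, HasDerivAt w (w' t) t) ∧
      (∀ t, HasDerivAt w' ((lam ^ 2 + q t) * w t) t) ∧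
      Tendsto (fun t => w t * exp (-lam * t)) atBot (𝓝 1) ∧
      Tendsto (fun t => w' t * exp (-lam * t)) atBot (𝓝 lam) := by
  obtain ⟨u, J, hu, hJ, hu1, hJ0⟩ := exists_dampedSystem_solution hlam hq hint
  have hexp : ∀ t, HasDerivAt (fun x => exp (lam * x)) (lam * exp (lam * t)) t := fun t => by
    simpa [mul_comm] using ((hasDerivAt_id t).const_mul lam).exp
  have hcancel : ∀ t, exp (lam * t) * exp (-lam * t) = 1 := fun t => by
    rw [← exp_add, neg_mul, add_neg_cancel, exp_zero]
  refine ⟨fun t => exp (lam * t) * u t, fun t => exp (lam * t) * (lam * u t + J t),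
    fun t => ((hexp t).mul (hu t)).congr_deriv (by ring),
    fun t => ((hexp t).mul (((hu t).const_mul lam).add (hJ t))).congr_deriv
      (by simp only [Pi.add_apply]; ring), ?_, ?_⟩
  · refine hu1.congr fun t => ?_
    linear_combination -u t * hcancel t
  · refine (by simpa using (hu1.const_mul lam).add hJ0 : Tendsto (fun t => lam * u t + J t) atBot
      (𝓝 lam)).congr fun t => ?_
    linear_combination -(lam * u t + J t) * hcancel t

lemma contDiff_two_of_hasDerivAt {f f' f'' : ℝ → ℝ} (hf : ∀ t, HasDerivAt f (f' t) t)
    (hf' : ∀ t, HasDerivAt f' (f'' t) t) (hf'' : Continuous f'') : ContDiff ℝ 2 f := by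
  have hderiv : deriv f = f' := funext fun t => (hf t).deriv
  rw [show (2 : WithTop ℕ∞) = 1 + 1 from rfl, contDiff_succ_iff_deriv, hderiv,
    contDiff_one_iff_deriv, funext fun t => (hf' t).deriv]
  exact ⟨fun t => (hf t).differentiableAt, by simp, fun t => (hf' t).differentiableAt, hf''⟩

end Solution

end AsymptoticODE

open AsymptoticODE in
theorem stmt0_general (lam eta c t0 : ℝ) (hlam : 0 < lam) (heta : 0 < eta)
    (V : ℝ → ℝ) (hV : ContDiff ℝ (⊤ : ℕ∞) V)
    (hVb : ∀ t < t0, |V t + lam ^ 2| ≤ c * Real.exp (eta * t)) :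
    ∃ w : ℝ → ℝ, ContDiff ℝ 2 w ∧
      (∀ t : ℝ, deriv (deriv w) t + V t * w t = 0) ∧
      Filter.Tendsto (fun t => w t * Real.exp (-lam * t)) Filter.atBot (nhds 1) ∧
      Filter.Tendsto (fun t => deriv w t * Real.exp (-lam * t)) Filter.atBot (nhds lam) := by
  have hq : Continuous fun t => -(V t + lam ^ 2) := by fun_prop
  obtain ⟨w, w', hw, hw', hw1, hw'1⟩ := exists_solution_tendsto_mul_exp hlam hq
    (integrableOn_Iic_of_abs_le_exp hq heta fun t ht => (abs_neg _).trans_le (hVb t ht))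
  have hderiv : deriv w = w' := funext fun t => (hw t).deriv
  have hwc : Continuous w := continuous_iff_continuousAt.2 fun t => (hw t).continuousAt
  refine ⟨w, contDiff_two_of_hasDerivAt hw hw' (by fun_prop), fun t => ?_, hw1, hderiv ▸ hw'1⟩
  rw [hderiv, (hw' t).deriv]
  ring

/-- existence of a solution of `w'' + V w = 0` with
`w(t) e^{-λ t} → 1` and `w'(t) e^{-λ t} → λ` as `t → -∞`, when
`|V(t) + λ²| ≤ c e^{η t}` for `t < t₀`. -/
theorem stmt0 (lam eta c t0 : ℝ) (hlam : 0 < lam) (heta : 0 < eta) (hc : 0 < c)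
    (V : ℝ → ℝ) (hV : ContDiff ℝ (⊤ : ℕ∞) V)
    (hVb : ∀ t < t0, |V t + lam ^ 2| ≤ c * Real.exp (eta * t)) :
    ∃ w : ℝ → ℝ, ContDiff ℝ 2 w ∧
      (∀ t : ℝ, deriv (deriv w) t + V t * w t = 0) ∧
      Filter.Tendsto (fun t => w t * Real.exp (-lam * t)) Filter.atBot (nhds 1) ∧
      Filter.Tendsto (fun t => deriv w t * Real.exp (-lam * t)) Filter.atBot (nhds lam) :=
  stmt0_general lam eta c t0 hlam heta V hV hVb
end

section
/- Let η > 0, c > 0 and t₀ ∈ ℝ, and let V : ℝ → ℝ be a smooth function satisfying |V(t)| ≤ c·exp(η·t) for all t < t₀. Then there exists a twice continuously differentiable function w : ℝ → ℝ satisfying w''(t) + V(t)·w(t) = 0 for all t ∈ ℝ and a constant C > 0 such that |w(t) + t| ≤ C and |w'(t) + 1| ≤ C·|t|·exp(η·t) for all t < min(t₀, −1). -/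
/-!
The solution `w` solves the Volterra equation
`w t = -t - ∫_{-∞}^t (t - s) V s w s ds`, constructed by Picard iteration from `-t`;
differentiating it gives `w' t = -1 - ∫_{-∞}^t V w` and `w'' = -V w`.
Put `M t = ∫_{-∞}^t (1 + |s|)² |V s| ds`, finite because `V` decays exponentially at `-∞`.
Since `t - s ≤ (1 + |t|)(1 + |s|)`, the `n`-th iterate is bounded by `(1 + |t|) M(t)ⁿ / n!`,
so the iterates sum to a solution with `|w t| ≤ (1 + |t|) e^{M t}`. Feeding this bound back into
the two integral formulas gives `|w t + t| ≤ e^{M T} M T` (using `t - s ≤ |s|` for `t ≤ 0`) and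
`|w' t + 1| = O(|t| e^{η t})` for `t ≤ T = min t₀ (-1)`.
-/

open MeasureTheory Set Filter Real Asymptotics Topology
open scoped Nat

namespace Volterra

lemma isBigO_one_add_abs_pow_mul_exp_atBot (k : ℕ) {a : ℝ} (ha : 0 < a) :
    (fun s : ℝ => (1 + |s|) ^ k * exp (a * s)) =O[atBot] fun s => exp (a / 2 * s) := by
  have hpoly : (fun s : ℝ => (1 - s) ^ k) =O[atBot] fun s => exp (a / 2 * (1 - s)) :=
    (isLittleO_pow_exp_pos_mul_atTop k (half_pos ha)).isBigO.comp_tendsto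
      (tendsto_atTop_add_const_left _ 1 tendsto_neg_atBot_atTop)
  have hcongr : (fun s : ℝ => (1 + |s|) ^ k) =ᶠ[atBot] fun s => (1 - s) ^ k := by
    filter_upwards [eventually_le_atBot 0] with s hs
    rw [abs_of_nonpos hs, sub_eq_add_neg]
  refine ((hpoly.congr' hcongr.symm EventuallyEq.rfl).mul (isBigO_refl _ _)).trans ?_
  refine (isBigO_refl (fun s => exp (a / 2 * s)) atBot).const_mul_left (exp (a / 2)) |>.congr_left
    fun s => ?_
  rw [← exp_add, ← exp_add]
  ring_nf

lemma integrableOn_Iic_of_abs_le_pow_mul_exp {f : ℝ → ℝ} (hf : Continuous f) (k : ℕ)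
    {a c t₀ : ℝ} (ha : 0 < a) (hfb : ∀ s < t₀, |f s| ≤ c * ((1 + |s|) ^ k * exp (a * s)))
    (b : ℝ) : IntegrableOn f (Iic b) := by
  have hO : f =O[atBot] fun s => (1 + |s|) ^ k * exp (a * s) := by
    refine IsBigO.of_bound c ?_
    filter_upwards [eventually_lt_atBot t₀] with s hs
    rw [Real.norm_eq_abs, Real.norm_of_nonneg (by positivity)]
    exact hfb s hs
  exact hf.continuousOn.locallyIntegrableOn measurableSet_Iic |>.integrableOn_of_isBigO_atBot
    (hO.trans (isBigO_one_add_abs_pow_mul_exp_atBot k ha))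
    ⟨Iic 0, Iic_mem_atBot 0, integrableOn_exp_mul_Iic (half_pos ha) 0⟩

lemma hasDerivAt_integral_Iic {f : ℝ → ℝ} (hf : Continuous f)
    (hint : ∀ b, IntegrableOn f (Iic b)) (t : ℝ) :
    HasDerivAt (fun x => ∫ s in Iic x, f s) (f t) t := by
  have hsplit (x : ℝ) : ∫ s in Iic x, f s = (∫ s in Iic t, f s) + ∫ s in t..x, f s := by
    rw [← intervalIntegral.integral_Iic_sub_Iic (hint t) (hint x)]
    ring
  exact ((intervalIntegral.integral_hasDerivAt_right (hf.intervalIntegrable _ _)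
    (hf.stronglyMeasurableAtFilter _ _) hf.continuousAt).const_add _).congr_of_eventuallyEq
    (.of_forall hsplit)

-- A majorant of `(1 - s) e^{a s}` with elementary integral over `Iic t`, from `x ≤ eˣ`
-- at `x = a (t - s) / 2`.
lemma one_sub_mul_exp_le {a : ℝ} (ha : 0 < a) (s t : ℝ) :
    (1 - s) * exp (a * s) ≤
      (1 - t) * exp (a * s) + 2 / a * (exp (a / 2 * t) * exp (a / 2 * s)) := by
  have hlin : t - s ≤ 2 / a * exp (a / 2 * (t - s)) := by
    have := add_one_le_exp (a / 2 * (t - s))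
    calc t - s = 2 / a * (a / 2 * (t - s)) := by field_simp
      _ ≤ 2 / a * exp (a / 2 * (t - s)) := by gcongr; linarith
  have hexp : exp (a / 2 * (t - s)) * exp (a * s) = exp (a / 2 * t) * exp (a / 2 * s) := by
    rw [← exp_add, ← exp_add]; ring_nf
  calc (1 - s) * exp (a * s) = (1 - t) * exp (a * s) + (t - s) * exp (a * s) := by ring
    _ ≤ (1 - t) * exp (a * s) + 2 / a * exp (a / 2 * (t - s)) * exp (a * s) := by gcongr
    _ = _ := by rw [mul_assoc, hexp]

lemma integrableOn_Iic_one_sub_mul_exp {a : ℝ} (ha : 0 < a) (t : ℝ) :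
    IntegrableOn (fun s => (1 - s) * exp (a * s)) (Iic t) :=
  integrableOn_Iic_of_abs_le_pow_mul_exp (by fun_prop) 1 ha (t₀ := 0) (c := 1) (fun s hs => by
    rw [abs_of_pos (mul_pos (by linarith) (exp_pos _)), abs_of_neg hs, pow_one, one_mul,
      sub_eq_add_neg]) t

lemma integral_Iic_one_sub_mul_exp_le {a : ℝ} (ha : 0 < a) (t : ℝ) :
    ∫ s in Iic t, (1 - s) * exp (a * s) ≤ exp (a * t) * ((1 - t) / a + 4 / a ^ 2) := by
  have hexp := integrableOn_exp_mul_Iic ha t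
  have hexp2 := integrableOn_exp_mul_Iic (half_pos ha) t
  calc ∫ s in Iic t, (1 - s) * exp (a * s)
      ≤ ∫ s in Iic t, ((1 - t) * exp (a * s) + 2 / a * (exp (a / 2 * t) * exp (a / 2 * s))) :=
        setIntegral_mono (integrableOn_Iic_one_sub_mul_exp ha t)
          ((hexp.const_mul _).add ((hexp2.const_mul _).const_mul _)) (one_sub_mul_exp_le ha · t)
    _ = exp (a * t) * ((1 - t) / a + 4 / a ^ 2) := by
        rw [integral_add (hexp.const_mul _) ((hexp2.const_mul _).const_mul _), integral_const_mul,
          integral_const_mul, integral_const_mul, integral_exp_mul_Iic ha,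
          integral_exp_mul_Iic (half_pos ha), ← mul_div_assoc (exp _), ← exp_add]
        field_simp
        ring_nf

lemma sub_le_one_add_abs_mul_one_add_abs (s t : ℝ) : t - s ≤ (1 + |t|) * (1 + |s|) := by
  nlinarith [le_abs_self t, neg_abs_le s, abs_nonneg t, abs_nonneg s]

noncomputable def weight (V : ℝ → ℝ) (s : ℝ) : ℝ := (1 + |s|) ^ 2 * |V s|

noncomputable def tailMass (V : ℝ → ℝ) (t : ℝ) : ℝ := ∫ s in Iic t, weight V s

noncomputable def volterra (V u : ℝ → ℝ) (t : ℝ) : ℝ :=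
  -∫ s in Iic t, (t - s) * (V s * u s)

def HasLinearGrowthOnIic (u : ℝ → ℝ) : Prop :=
  ∀ b, ∃ K, ∀ s ≤ b, |u s| ≤ (1 + |s|) * K

lemma HasLinearGrowthOnIic.of_monotone {u K : ℝ → ℝ} (hK : Monotone K)
    (hu : ∀ s, |u s| ≤ (1 + |s|) * K s) : HasLinearGrowthOnIic u :=
  fun b => ⟨K b, fun s hs => (hu s).trans (by gcongr; exact hK hs)⟩

variable {V : ℝ → ℝ}

lemma integrableOn_Iic_weight {η c t₀ : ℝ} (hV : Continuous V) (hη : 0 < η)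
    (hVb : ∀ t < t₀, |V t| ≤ c * exp (η * t)) (b : ℝ) : IntegrableOn (weight V) (Iic b) :=
  integrableOn_Iic_of_abs_le_pow_mul_exp (by unfold weight; fun_prop) 2 hη (fun s hs => by
    rw [weight, abs_of_nonneg (by positivity)]
    nlinarith [hVb s hs, pow_nonneg (by positivity : (0 : ℝ) ≤ 1 + |s|) 2]) b

lemma weight_nonneg (V : ℝ → ℝ) (s : ℝ) : 0 ≤ weight V s := by
  unfold weight; positivity

lemma tailMass_nonneg (V : ℝ → ℝ) (t : ℝ) : 0 ≤ tailMass V t :=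
  setIntegral_nonneg measurableSet_Iic fun s _ => weight_nonneg V s

lemma tailMass_mono (hm : ∀ b, IntegrableOn (weight V) (Iic b)) : Monotone (tailMass V) :=
  fun _ b hab => setIntegral_mono_set (hm b) (.of_forall (weight_nonneg V))
    (Iic_subset_Iic.mpr hab).eventuallyLE

lemma hasDerivAt_tailMass (hV : Continuous V) (hm : ∀ b, IntegrableOn (weight V) (Iic b))
    (t : ℝ) : HasDerivAt (tailMass V) (weight V t) t :=
  hasDerivAt_integral_Iic (by unfold weight; fun_prop) hm t

lemma continuous_tailMass (hV : Continuous V) (hm : ∀ b, IntegrableOn (weight V) (Iic b)) :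
    Continuous (tailMass V) :=
  continuous_iff_continuousAt.mpr fun t => (hasDerivAt_tailMass hV hm t).continuousAt

lemma integrableOn_Iic_of_abs_le_weight {f : ℝ → ℝ} {b : ℝ} (hf : Continuous f)
    (hm : IntegrableOn (weight V) (Iic b)) (K : ℝ) (hfb : ∀ s ≤ b, |f s| ≤ K * weight V s) :
    IntegrableOn f (Iic b) :=
  (hm.const_mul K).mono' hf.aestronglyMeasurable
    ((ae_restrict_iff' measurableSet_Iic).mpr (.of_forall hfb))

lemma monotone_tailMass_pow_div_factorial (hm : ∀ b, IntegrableOn (weight V) (Iic b)) (n : ℕ) :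
    Monotone fun s => tailMass V s ^ n / n ! := fun x _ hxy => by
  have := tailMass_nonneg V x
  dsimp only
  gcongr
  exact tailMass_mono hm hxy

lemma integrableOn_weight_mul_tailMass_pow (hV : Continuous V)
    (hm : ∀ b, IntegrableOn (weight V) (Iic b)) (n : ℕ) (t : ℝ) :
    IntegrableOn (fun s => weight V s * (tailMass V s ^ n / n !)) (Iic t) := by
  have := continuous_tailMass hV hm
  refine integrableOn_Iic_of_abs_le_weight (by unfold weight; fun_prop) (hm t)
    (tailMass V t ^ n / n !) fun s hs => ?_
  have hK : 0 ≤ tailMass V s ^ n / n ! := by have := tailMass_nonneg V s; positivity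
  rw [abs_of_nonneg (mul_nonneg (weight_nonneg V s) hK), mul_comm]
  exact mul_le_mul_of_nonneg_right (monotone_tailMass_pow_div_factorial hm n hs)
    (weight_nonneg V s)

lemma integral_weight_mul_tailMass_pow (hV : Continuous V)
    (hm : ∀ b, IntegrableOn (weight V) (Iic b)) (n : ℕ) (t : ℝ) :
    ∫ s in Iic t, weight V s * (tailMass V s ^ n / n !) = tailMass V t ^ (n + 1) / (n + 1)! := by
  have hderiv : ∀ x ∈ Iic t, HasDerivAt (fun s => tailMass V s ^ (n + 1) / (n + 1)!)
      (weight V x * (tailMass V x ^ n / n !)) x := fun x _ => by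
    refine (((hasDerivAt_tailMass hV hm x).pow (n + 1)).div_const ((n + 1)! : ℝ)).congr_deriv ?_
    rw [Nat.factorial_succ]
    push_cast
    field_simp
  have hlim : Tendsto (fun s => tailMass V s ^ (n + 1) / (n + 1)!) atBot (𝓝 0) := by
    have hM : Tendsto (tailMass V) atBot (𝓝 0) := tendsto_integral_Iic_zero tendsto_id
    simpa using (hM.pow (n + 1)).div_const ((n + 1)! : ℝ)
  simpa using integral_Iic_of_hasDerivAt_of_tendsto' hderiv
    (integrableOn_weight_mul_tailMass_pow hV hm n t) hlim

lemma abs_mul_le_weight {u : ℝ → ℝ} {s K : ℝ} (h : |u s| ≤ (1 + |s|) * K) :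
    (1 + |s|) * |V s * u s| ≤ K * weight V s :=
  calc (1 + |s|) * |V s * u s| ≤ (1 + |s|) * (|V s| * ((1 + |s|) * K)) := by
        rw [abs_mul]; gcongr
    _ = K * weight V s := by rw [weight]; ring

section Operator

variable {u : ℝ → ℝ}

lemma integrableOn_Iic_mul (hV : Continuous V) (hm : ∀ b, IntegrableOn (weight V) (Iic b))
    (hu : Continuous u) (hg : HasLinearGrowthOnIic u) (b : ℝ) :
    IntegrableOn (fun s => V s * u s) (Iic b) := by
  obtain ⟨K, hK⟩ := hg b
  refine integrableOn_Iic_of_abs_le_weight (by fun_prop) (hm b) K fun s hs => ?_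
  refine le_trans ?_ (abs_mul_le_weight (hK s hs))
  exact le_mul_of_one_le_left (abs_nonneg _) (by linarith [abs_nonneg s])

lemma integrableOn_Iic_id_mul_mul (hV : Continuous V) (hm : ∀ b, IntegrableOn (weight V) (Iic b))
    (hu : Continuous u) (hg : HasLinearGrowthOnIic u) (b : ℝ) :
    IntegrableOn (fun s => s * (V s * u s)) (Iic b) := by
  obtain ⟨K, hK⟩ := hg b
  refine integrableOn_Iic_of_abs_le_weight (by fun_prop) (hm b) K fun s hs => ?_
  refine le_trans ?_ (abs_mul_le_weight (hK s hs))
  rw [abs_mul]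
  gcongr
  linarith

lemma integrableOn_Iic_volterra_integrand (hV : Continuous V)
    (hm : ∀ b, IntegrableOn (weight V) (Iic b)) (hu : Continuous u) (hg : HasLinearGrowthOnIic u)
    (t : ℝ) : IntegrableOn (fun s => (t - s) * (V s * u s)) (Iic t) := by
  have h : IntegrableOn (fun s => t * (V s * u s) - s * (V s * u s)) (Iic t) :=
    ((integrableOn_Iic_mul hV hm hu hg t).const_mul t).sub
      (integrableOn_Iic_id_mul_mul hV hm hu hg t)
  simpa only [sub_mul] using h

lemma volterra_eq (hV : Continuous V) (hm : ∀ b, IntegrableOn (weight V) (Iic b))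
    (hu : Continuous u) (hg : HasLinearGrowthOnIic u) (t : ℝ) :
    volterra V u t = -(t * ∫ s in Iic t, V s * u s) + ∫ s in Iic t, s * (V s * u s) := by
  simp only [volterra, sub_mul]
  rw [integral_sub ((integrableOn_Iic_mul hV hm hu hg t).const_mul t)
    (integrableOn_Iic_id_mul_mul hV hm hu hg t), integral_const_mul]
  ring

lemma hasDerivAt_volterra (hV : Continuous V) (hm : ∀ b, IntegrableOn (weight V) (Iic b))
    (hu : Continuous u) (hg : HasLinearGrowthOnIic u) (t : ℝ) :
    HasDerivAt (volterra V u) (-∫ s in Iic t, V s * u s) t := by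
  have hG := hasDerivAt_integral_Iic (hV.mul hu) (integrableOn_Iic_mul hV hm hu hg) t
  have hH := hasDerivAt_integral_Iic (continuous_id.mul (hV.mul hu))
    (integrableOn_Iic_id_mul_mul hV hm hu hg) t
  refine ((((hasDerivAt_id t).mul hG).neg.add hH).congr_of_eventuallyEq
    (.of_forall (volterra_eq hV hm hu hg))).congr_deriv ?_
  simp

lemma continuous_volterra (hV : Continuous V) (hm : ∀ b, IntegrableOn (weight V) (Iic b))
    (hu : Continuous u) (hg : HasLinearGrowthOnIic u) :
    Continuous (volterra V u) :=
  continuous_iff_continuousAt.mpr fun t => (hasDerivAt_volterra hV hm hu hg t).continuousAt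

end Operator

lemma integral_norm_volterra_integrand_le {u K : ℝ → ℝ} {t A : ℝ}
    (hK : IntegrableOn (fun s => weight V s * K s) (Iic t))
    (hA : ∀ s ≤ t, t - s ≤ A * (1 + |s|)) (hu : ∀ s ≤ t, |u s| ≤ (1 + |s|) * K s) :
    ∫ s in Iic t, ‖(t - s) * (V s * u s)‖ ≤ A * ∫ s in Iic t, weight V s * K s := by
  have hA0 : 0 ≤ A := by nlinarith [hA t le_rfl, abs_nonneg t]
  rw [← integral_const_mul]
  refine integral_mono_of_nonneg (.of_forall fun _ => norm_nonneg _) (hK.const_mul A)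
    ((ae_restrict_iff' measurableSet_Iic).mpr (.of_forall fun s hs => ?_))
  dsimp only
  rw [Real.norm_eq_abs, abs_mul, abs_of_nonneg (sub_nonneg.mpr hs)]
  calc (t - s) * |V s * u s| ≤ A * ((1 + |s|) * |V s * u s|) := by
        rw [← mul_assoc]; gcongr; exact hA s hs
    _ ≤ A * (weight V s * K s) := by
        rw [mul_comm (weight V s)]
        exact mul_le_mul_of_nonneg_left (abs_mul_le_weight (hu s hs)) hA0

lemma abs_volterra_le {u K : ℝ → ℝ} {t A : ℝ}
    (hK : IntegrableOn (fun s => weight V s * K s) (Iic t))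
    (hA : ∀ s ≤ t, t - s ≤ A * (1 + |s|)) (hu : ∀ s ≤ t, |u s| ≤ (1 + |s|) * K s) :
    |volterra V u t| ≤ A * ∫ s in Iic t, weight V s * K s := by
  rw [volterra, abs_neg, ← Real.norm_eq_abs]
  exact (norm_integral_le_integral_norm _).trans (integral_norm_volterra_integrand_le hK hA hu)

noncomputable def picard (V : ℝ → ℝ) : ℕ → ℝ → ℝ
  | 0 => fun t => -t
  | n + 1 => volterra V (picard V n)

lemma continuous_picard_and_abs_le (hV : Continuous V)
    (hm : ∀ b, IntegrableOn (weight V) (Iic b)) (n : ℕ) :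
    Continuous (picard V n) ∧ ∀ t, |picard V n t| ≤ (1 + |t|) * (tailMass V t ^ n / n !) := by
  induction n with
  | zero => exact ⟨continuous_neg, fun t => by simp [picard]⟩
  | succ n ih =>
    obtain ⟨hcont, hbound⟩ := ih
    have hg := HasLinearGrowthOnIic.of_monotone (monotone_tailMass_pow_div_factorial hm n) hbound
    refine ⟨continuous_volterra hV hm hcont hg, fun t => ?_⟩
    rw [← integral_weight_mul_tailMass_pow hV hm]
    refine abs_volterra_le (integrableOn_weight_mul_tailMass_pow hV hm n t) 
      (fun s _ => sub_le_one_add_abs_mul_one_add_abs s t) fun s _ => hbound s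

lemma abs_picard_le (hV : Continuous V) (hm : ∀ b, IntegrableOn (weight V) (Iic b)) (n : ℕ)
    (t : ℝ) : |picard V n t| ≤ (1 + |t|) * (tailMass V t ^ n / n !) :=
  (continuous_picard_and_abs_le hV hm n).2 t

noncomputable def volterraSol (V : ℝ → ℝ) (t : ℝ) : ℝ := ∑' n, picard V n t

lemma hasSum_picard (hV : Continuous V) (hm : ∀ b, IntegrableOn (weight V) (Iic b)) (t : ℝ) :
    HasSum (fun n => picard V n t) (volterraSol V t) :=
  (Summable.of_norm_bounded ((Real.summable_pow_div_factorial _).mul_left (1 + |t|))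
    (abs_picard_le hV hm · t)).hasSum

lemma abs_volterraSol_le (hV : Continuous V) (hm : ∀ b, IntegrableOn (weight V) (Iic b))
    (t : ℝ) : |volterraSol V t| ≤ (1 + |t|) * exp (tailMass V t) := by
  have hexp : HasSum (fun n => tailMass V t ^ n / n !) (exp (tailMass V t)) := by
    rw [exp_eq_exp_ℝ]
    exact NormedSpace.expSeries_div_hasSum_exp _
  rw [← Real.norm_eq_abs]
  exact tsum_of_norm_bounded (hexp.mul_left (1 + |t|)) (abs_picard_le hV hm · t)

lemma hasLinearGrowthOnIic_volterraSol (hV : Continuous V)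
    (hm : ∀ b, IntegrableOn (weight V) (Iic b)) : HasLinearGrowthOnIic (volterraSol V) :=
  .of_monotone (exp_monotone.comp (tailMass_mono hm)) (abs_volterraSol_le hV hm)

lemma continuous_volterraSol (hV : Continuous V) (hm : ∀ b, IntegrableOn (weight V) (Iic b)) :
    Continuous (volterraSol V) := by
  refine continuous_iff_continuousAt.mpr fun x => ?_
  set R := |x| + 1
  have hR : ContinuousOn (volterraSol V) (Ioo (-R) R) := by
    refine continuousOn_tsum (fun n => (continuous_picard_and_abs_le hV hm n).1.continuousOn)
      ((Real.summable_pow_div_factorial (tailMass V R)).mul_left (1 + R)) fun n s hs => ?_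
    have hsR : |s| ≤ R := abs_le.mpr ⟨hs.1.le, hs.2.le⟩
    have := tailMass_nonneg V s
    refine (abs_picard_le hV hm n s).trans ?_
    gcongr
    exact tailMass_mono hm ((le_abs_self s).trans hsR)
  exact hR.continuousAt (Ioo_mem_nhds (by linarith [neg_abs_le x]) (by linarith [le_abs_self x]))

lemma volterraSol_add_self (hV : Continuous V) (hm : ∀ b, IntegrableOn (weight V) (Iic b))
    (t : ℝ) : volterraSol V t + t = volterra V (volterraSol V) t := by
  have hnorm : Summable fun n => ∫ s in Iic t, ‖(t - s) * (V s * picard V n s)‖ := by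
    refine Summable.of_nonneg_of_le (fun n => integral_nonneg fun _ => norm_nonneg _)
      (fun n => (integral_norm_volterra_integrand_le
        (integrableOn_weight_mul_tailMass_pow hV hm n t)
        (fun s _ => sub_le_one_add_abs_mul_one_add_abs s t)
        fun s _ => abs_picard_le hV hm n s).trans_eq
          (by rw [integral_weight_mul_tailMass_pow hV hm])) ?_
    exact ((summable_nat_add_iff 1).mpr (Real.summable_pow_div_factorial _)).mul_left _
  have hsum := (hasSum_integral_of_summable_integral_norm (fun n =>
    integrableOn_Iic_volterra_integrand hV hm (continuous_picard_and_abs_le hV hm n).1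
      (.of_monotone (monotone_tailMass_pow_div_factorial hm n) (abs_picard_le hV hm n)) t)
    hnorm).neg
  simp only [tsum_mul_left] at hsum
  have htail := (hasSum_nat_add_iff' 1).mpr (hasSum_picard hV hm t)
  simp only [Finset.range_one, Finset.sum_singleton, picard, sub_neg_eq_add] at htail
  exact htail.unique hsum

lemma hasDerivAt_volterraSol (hV : Continuous V) (hm : ∀ b, IntegrableOn (weight V) (Iic b))
    (t : ℝ) : HasDerivAt (volterraSol V) (-1 - ∫ s in Iic t, V s * volterraSol V s) t := by
  rw [sub_eq_add_neg]
  exact ((hasDerivAt_neg t).add (hasDerivAt_volterra hV hm (continuous_volterraSol hV hm)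
    (hasLinearGrowthOnIic_volterraSol hV hm) t)).congr_of_eventuallyEq
      (.of_forall fun x => by simp only [Pi.add_apply]; linarith [volterraSol_add_self hV hm x])

lemma deriv_volterraSol (hV : Continuous V) (hm : ∀ b, IntegrableOn (weight V) (Iic b)) :
    deriv (volterraSol V) = fun t => -1 - ∫ s in Iic t, V s * volterraSol V s :=
  funext fun t => (hasDerivAt_volterraSol hV hm t).deriv

lemma hasDerivAt_deriv_volterraSol (hV : Continuous V)
    (hm : ∀ b, IntegrableOn (weight V) (Iic b)) (t : ℝ) :
    HasDerivAt (deriv (volterraSol V)) (-(V t * volterraSol V t)) t := by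
  rw [deriv_volterraSol hV hm]
  exact (hasDerivAt_integral_Iic (hV.mul (continuous_volterraSol hV hm))
    (integrableOn_Iic_mul hV hm (continuous_volterraSol hV hm)
      (hasLinearGrowthOnIic_volterraSol hV hm)) t).const_sub (-1)

lemma contDiff_volterraSol (hV : Continuous V) (hm : ∀ b, IntegrableOn (weight V) (Iic b)) :
    ContDiff ℝ 2 (volterraSol V) := by
  have hderiv2 : deriv (deriv (volterraSol V)) = fun t => -(V t * volterraSol V t) :=
    funext fun t => (hasDerivAt_deriv_volterraSol hV hm t).deriv
  refine contDiff_succ_iff_deriv.mpr ⟨fun t => (hasDerivAt_volterraSol hV hm t).differentiableAt,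
    by simp, contDiff_one_iff_deriv.mpr ⟨fun t =>
      (hasDerivAt_deriv_volterraSol hV hm t).differentiableAt, ?_⟩⟩
  rw [hderiv2]
  exact (hV.mul (continuous_volterraSol hV hm)).neg

lemma abs_volterraSol_add_le (hV : Continuous V) (hm : ∀ b, IntegrableOn (weight V) (Iic b))
    {t T : ℝ} (htT : t ≤ T) (hT : T ≤ 0) :
    |volterraSol V t + t| ≤ exp (tailMass V T) * tailMass V T := by
  rw [volterraSol_add_self hV hm]
  refine (abs_volterra_le (K := fun _ => exp (tailMass V T)) ((hm t).mul_const _)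
    (A := 1) (fun s hs => ?_) fun s hs => ?_).trans ?_
  · linarith [neg_abs_le s]
  · refine (abs_volterraSol_le hV hm s).trans ?_
    gcongr
    exact tailMass_mono hm (hs.trans htT)
  · rw [one_mul, integral_mul_const, mul_comm]
    gcongr
    exact tailMass_mono hm htT

lemma abs_deriv_volterraSol_add_one_le (hV : Continuous V)
    (hm : ∀ b, IntegrableOn (weight V) (Iic b)) {η c t₀ : ℝ} (hη : 0 < η) (hc : 0 ≤ c)
    (hVb : ∀ t < t₀, |V t| ≤ c * exp (η * t)) {t T : ℝ} (ht₀ : t < t₀) (ht : t ≤ -1)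
    (htT : t ≤ T) :
    |deriv (volterraSol V) t + 1| ≤
      c * exp (tailMass V T) * (2 / η + 4 / η ^ 2) * |t| * exp (η * t) := by
  set E := exp (tailMass V T)
  have hVw (s : ℝ) (hs : s ≤ t) :
      ‖V s * volterraSol V s‖ ≤ c * E * ((1 - s) * exp (η * s)) := by
    have hw : |volterraSol V s| ≤ (1 - s) * E := by
      refine (abs_volterraSol_le hV hm s).trans ?_
      rw [abs_of_nonpos (by linarith), ← sub_eq_add_neg]
      exact mul_le_mul_of_nonneg_left (exp_le_exp.mpr (tailMass_mono hm (hs.trans htT)))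
        (by linarith)
    rw [Real.norm_eq_abs, abs_mul]
    calc |V s| * |volterraSol V s| ≤ c * exp (η * s) * ((1 - s) * E) :=
          mul_le_mul (hVb s (hs.trans_lt ht₀)) hw (abs_nonneg _) (by positivity)
      _ = c * E * ((1 - s) * exp (η * s)) := by ring
  have hderiv : deriv (volterraSol V) t + 1 = -∫ s in Iic t, V s * volterraSol V s := by
    rw [deriv_volterraSol hV hm]; ring
  rw [hderiv, abs_neg, ← Real.norm_eq_abs]
  calc ‖∫ s in Iic t, V s * volterraSol V s‖
        ≤ ∫ s in Iic t, c * E * ((1 - s) * exp (η * s)) :=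
        norm_integral_le_of_norm_le ((integrableOn_Iic_one_sub_mul_exp hη t).const_mul _)
          ((ae_restrict_iff' measurableSet_Iic).mpr (.of_forall hVw))
    _ ≤ c * E * (exp (η * t) * ((1 - t) / η + 4 / η ^ 2)) := by
        rw [integral_const_mul]
        gcongr
        exact integral_Iic_one_sub_mul_exp_le hη t
    _ ≤ c * E * (exp (η * t) * ((2 / η + 4 / η ^ 2) * |t|)) := by
        rw [abs_of_neg (by linarith)]
        gcongr
        have h1 : (1 - t) / η ≤ 2 / η * -t := by
          rw [div_mul_eq_mul_div]; gcongr; linarith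
        have h2 : 4 / η ^ 2 ≤ 4 / η ^ 2 * -t :=
          le_mul_of_one_le_right (by positivity) (by linarith)
        linarith
    _ = _ := by ring

end Volterra

open Volterra

/-- the case `λ = 0`: a solution behaving like `-t + O(1)`
as `t → -∞`. -/
theorem stmt4 (eta c t0 : ℝ) (heta : 0 < eta) (hc : 0 < c)
    (V : ℝ → ℝ) (hV : ContDiff ℝ (⊤ : ℕ∞) V)
    (hVb : ∀ t < t0, |V t| ≤ c * Real.exp (eta * t)) :
    ∃ w : ℝ → ℝ, ContDiff ℝ 2 w ∧
      (∀ t : ℝ, deriv (deriv w) t + V t * w t = 0) ∧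
      ∃ C : ℝ, 0 < C ∧
        ∀ t < min t0 (-1 : ℝ),
          |w t + t| ≤ C ∧ |deriv w t + 1| ≤ C * |t| * Real.exp (eta * t) := by
  have hVc : Continuous V := hV.continuous
  have hm := integrableOn_Iic_weight hVc heta hVb
  set T := min t0 (-1)
  set M := tailMass V T
  have hM : 0 ≤ M := tailMass_nonneg V T
  refine ⟨volterraSol V, contDiff_volterraSol hVc hm, fun t => ?_, ?_⟩
  · rw [(hasDerivAt_deriv_volterraSol hVc hm t).deriv]
    ring
  refine ⟨exp M * M + c * exp M * (2 / eta + 4 / eta ^ 2) + 1, by positivity,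
    fun t ht => ⟨?_, ?_⟩⟩
  · have hw := abs_volterraSol_add_le hVc hm ht.le ((min_le_right _ _).trans (by norm_num))
    have : 0 ≤ c * exp M * (2 / eta + 4 / eta ^ 2) := by positivity
    linarith
  · refine (abs_deriv_volterraSol_add_one_le hVc hm heta hc.le hVb
      (ht.trans_le (min_le_left _ _)) (ht.trans_le (min_le_right _ _)).le ht.le).trans ?_
    gcongr
    linarith [mul_nonneg (exp_pos M).le hM]
end

section
/- Let λ > 0, η > 0, c > 0 and t₀ ∈ ℝ, and let V : ℝ → ℝ be a smooth function satisfying |V(t) − λ²| ≤ c·exp(η·t) for all t < t₀. Then there exist two linearly independent twice continuously differentiable solutions w⁺, w⁻ : ℝ → ℝ of w''(t) + V(t)·w(t) = 0 such that w⁺(t) − cos(λ·t) → 0 and w⁻(t) − sin(λ·t) → 0 as t → −∞, and moreover w⁺, w⁻, (w⁺)' and (w⁻)' are all bounded on the interval (−∞, t₀). -/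
/-!
Write `V = ω² - p`. On a half-line `(-∞, t₁]` on which `∫ |p| ≤ ω / 4`, the solution asymptotic
to `α cos ωt + β sin ωt` is the fixed point of the variation-of-constants equation
`w t = α cos ωt + β sin ωt + ω⁻¹ ∫_{-∞}^t sin (ω (t - s)) p s w s ds`, which is a contraction
on bounded continuous functions; its correction term is `O(∫_{-∞}^t |p|)`, hence tends to `0`.
The exponential bound on `V - λ²` makes `p` integrable near `-∞`. The solution is
then continued to all of `ℝ` as a solution of the linear system `x' = A(t) x`, whose solutions
exist globally because the `n`-th Picard iterate on a compact interval is Lipschitz with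
constant `(M |t - t₀|)ⁿ / n!`. Finally, a non-trivial combination `α cos ωt + β sin ωt` is
periodic, so it cannot tend to `0`: this gives the linear independence.
-/

open MeasureTheory Set Filter Topology Real BoundedContinuousFunction
open scoped Nat

namespace LinearODE

variable {E : Type*} [NormedAddCommGroup E] [NormedSpace ℝ E] (A : C(ℝ, E →L[ℝ] E))

noncomputable def picardIcc {b c : ℝ} (hbc : b ≤ c) (t₀ : ℝ) (x₀ : E) (f : C(Icc b c, E)) :
    C(Icc b c, E) where
  toFun t := ODE.picard (fun s => A s) t₀ x₀ (IccExtend hbc f) t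
  continuous_toFun := by
    refine (continuous_const.add (intervalIntegral.continuous_primitive (fun u v => ?_) t₀)).comp
      continuous_subtype_val
    exact (A.continuous.clm_apply f.continuous.Icc_extend').intervalIntegrable u v

variable {A} {b c t₀ M : ℝ} {hbc : b ≤ c} {x₀ : E}

lemma picardIcc_apply (f : C(Icc b c, E)) (t : Icc b c) :
    picardIcc A hbc t₀ x₀ f t = x₀ + ∫ s in t₀..t, A s (IccExtend hbc f s) := rfl

lemma dist_iterate_picardIcc_apply_le (hM : ∀ s ∈ Icc b c, ‖A s‖ ≤ M) (ht₀ : t₀ ∈ Icc b c)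
    (n : ℕ) (f g : C(Icc b c, E)) (t : Icc b c) :
    dist ((picardIcc A hbc t₀ x₀)^[n] f t) ((picardIcc A hbc t₀ x₀)^[n] g t) ≤
      (M * |t - t₀|) ^ n / n ! * dist f g := by
  induction n generalizing t with
  | zero => simpa using ContinuousMap.dist_apply_le_dist t
  | succ n ih =>
    have hM0 : 0 ≤ M := (norm_nonneg _).trans (hM t₀ ht₀)
    set F := (picardIcc A hbc t₀ x₀)^[n] f
    set G := (picardIcc A hbc t₀ x₀)^[n] g
    have hint (H : C(Icc b c, E)) :
        IntervalIntegrable (fun s => A s (IccExtend hbc H s)) volume t₀ t :=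
      (A.continuous.clm_apply H.continuous.Icc_extend').intervalIntegrable _ _
    have hstep : ∀ s ∈ uIoc t₀ (t : ℝ), ‖A s (IccExtend hbc F s) - A s (IccExtend hbc G s)‖ ≤
        M ^ (n + 1) / n ! * dist f g * |s - t₀| ^ n := by
      intro s hs
      have hs' : s ∈ Icc b c := uIcc_subset_Icc ht₀ t.2 (uIoc_subset_uIcc hs)
      rw [← map_sub, IccExtend_of_mem hbc F hs', IccExtend_of_mem hbc G hs']
      calc ‖A s (F ⟨s, hs'⟩ - G ⟨s, hs'⟩)‖ ≤ M * dist (F ⟨s, hs'⟩) (G ⟨s, hs'⟩) := by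
            rw [dist_eq_norm]; exact (A s).le_of_opNorm_le (hM s hs') _
        _ ≤ M * ((M * |s - t₀|) ^ n / n ! * dist f g) := by gcongr; exact ih _
        _ = _ := by ring
    rw [Function.iterate_succ_apply', Function.iterate_succ_apply', picardIcc_apply,
      picardIcc_apply, dist_add_left, dist_eq_norm,
      ← intervalIntegral.integral_sub (hint F) (hint G)]
    calc _ ≤ |∫ s in t₀..t, M ^ (n + 1) / n ! * dist f g * |s - t₀| ^ n| :=
          intervalIntegral.norm_integral_le_abs_of_norm_le
            ((ae_restrict_mem measurableSet_uIoc).mono hstep)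
            (Continuous.intervalIntegrable (by fun_prop) _ _)
      _ = _ := by
        rw [intervalIntegral.integral_const_mul, abs_mul, intervalIntegral.abs_intervalIntegral_eq,
          integral_pow_abs_sub_uIoc, abs_of_nonneg (by positivity), abs_of_nonneg (by positivity),
          Nat.factorial_succ]
        push_cast
        field_simp
        ring

variable (A) in
theorem exists_hasDerivAt_Ioo [CompleteSpace E] (ht₀ : t₀ ∈ Icc b c) (x₀ : E) :
    ∃ x : ℝ → E, x t₀ = x₀ ∧ ∀ t ∈ Ioo b c, HasDerivAt x (A t (x t)) t := by
  have hbc : b ≤ c := ht₀.1.trans ht₀.2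
  obtain ⟨M, hM⟩ := isCompact_Icc.exists_bound_of_continuousOn A.continuous.continuousOn
  have hM0 : 0 ≤ M := (norm_nonneg _).trans (hM t₀ ht₀)
  obtain ⟨n, hn⟩ := ((FloorSemiring.tendsto_pow_div_factorial_atTop (M * (c - b))).eventually
    (gt_mem_nhds one_pos)).exists
  have hK : 0 ≤ (M * (c - b)) ^ n / n ! := by have := sub_nonneg.2 hbc; positivity
  have hcontr : ContractingWith (⟨_, hK⟩ : NNReal) (picardIcc A hbc t₀ x₀)^[n] := by
    refine ⟨hn, LipschitzWith.of_dist_le_mul fun f g => ?_⟩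
    refine (ContinuousMap.dist_le (by positivity)).2 fun t => ?_
    refine (dist_iterate_picardIcc_apply_le hM ht₀ n f g t).trans ?_
    have : |(t : ℝ) - t₀| ≤ c - b := abs_sub_le_iff.2 ⟨by linarith [t.2.2, ht₀.1],
      by linarith [t.2.1, ht₀.2]⟩
    show _ ≤ (M * (c - b)) ^ n / n ! * dist f g
    gcongr
  have : Nonempty C(Icc b c, E) := ⟨0⟩
  set f := ContractingWith.fixedPoint _ hcontr
  have hfix : picardIcc A hbc t₀ x₀ f = f := hcontr.isFixedPt_fixedPoint_iterate
  have hf : ∀ t ∈ Icc b c, IccExtend hbc f t = x₀ + ∫ s in t₀..t, A s (IccExtend hbc f s) := by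
    intro t ht
    rw [IccExtend_of_mem hbc f ht]
    exact (congrArg (fun g : C(Icc b c, E) => g ⟨t, ht⟩) hfix).symm
  have hcont : Continuous fun s => A s (IccExtend hbc f s) :=
    A.continuous.clm_apply f.continuous.Icc_extend'
  refine ⟨IccExtend hbc f, ?_, fun t ht => ?_⟩
  · rw [hf t₀ ht₀, intervalIntegral.integral_same, add_zero]
  · refine ((intervalIntegral.integral_hasDerivAt_right (hcont.intervalIntegrable t₀ t)
      (hcont.stronglyMeasurableAtFilter _ _) hcont.continuousAt).const_add
      x₀).congr_of_eventuallyEq ?_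
    filter_upwards [Ioo_mem_nhds ht.1 ht.2] with s hs using hf s (Ioo_subset_Icc_self hs)

theorem eqOn_Ioo_of_hasDerivAt {x y : ℝ → E} (ht₀ : t₀ ∈ Ioo b c)
    (hx : ∀ t ∈ Ioo b c, HasDerivAt x (A t (x t)) t)
    (hy : ∀ t ∈ Ioo b c, HasDerivAt y (A t (y t)) t) (h : x t₀ = y t₀) :
    EqOn x y (Ioo b c) := by
  obtain ⟨M, hM⟩ := isCompact_Icc.exists_bound_of_continuousOn
    (A.continuous.continuousOn (s := Icc b c))
  have hlip : ∀ t ∈ Ioo b c, LipschitzOnWith M.toNNReal (A t) univ := fun t ht =>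
    ((A t).lipschitz.weaken (by
      rw [← NNReal.coe_le_coe, coe_nnnorm, Real.coe_toNNReal']
      exact (hM t (Ioo_subset_Icc_self ht)).trans (le_max_left _ _))).lipschitzOnWith
  exact ODE_solution_unique_of_mem_Ioo hlip ht₀ (fun t ht => ⟨hx t ht, mem_univ _⟩)
    (fun t ht => ⟨hy t ht, mem_univ _⟩) h

variable (A) in
theorem exists_isIntegralCurve [CompleteSpace E] (t₀ : ℝ) (x₀ : E) :
    ∃ x : ℝ → E, x t₀ = x₀ ∧ IsIntegralCurve x (fun t => A t) := by
  choose sol hsol₀ hsol using fun r : ℝ =>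
    exists_hasDerivAt_Ioo A (b := t₀ - |r|) (c := t₀ + |r|)
      ⟨by linarith [abs_nonneg r], by linarith [abs_nonneg r]⟩ x₀
  have hmem {t r : ℝ} (h : |t - t₀| < |r|) : t ∈ Ioo (t₀ - |r|) (t₀ + |r|) := by
    rw [abs_lt] at h
    constructor <;> linarith
  have hagree {t r r' : ℝ} (hr : |t - t₀| < |r|) (hr' : |t - t₀| < |r'|) :
      sol r t = sol r' t := by
    wlog hle : |r| ≤ |r'| generalizing r r'
    · exact (this hr' hr (le_of_not_ge hle)).symm
    have hsub : Ioo (t₀ - |r|) (t₀ + |r|) ⊆ Ioo (t₀ - |r'|) (t₀ + |r'|) :=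
      Ioo_subset_Ioo (by linarith) (by linarith)
    exact eqOn_Ioo_of_hasDerivAt (hmem (by simpa using (abs_nonneg _).trans_lt hr)) (hsol r)
      (fun s hs => hsol r' s (hsub hs)) ((hsol₀ r).trans (hsol₀ r').symm) (hmem hr)
  have hself (t : ℝ) : |t - t₀| < |(|t - t₀| + 1)| := by
    rw [abs_of_nonneg (by positivity : (0 : ℝ) ≤ |t - t₀| + 1)]; linarith
  refine ⟨fun t => sol (|t - t₀| + 1) t, hsol₀ _, fun t => ?_⟩
  set R := |t - t₀| + 2
  have hR (s : ℝ) (hs : |s - t| < 1) : |s - t₀| < |R| := by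
    rw [abs_of_nonneg (by positivity : (0 : ℝ) ≤ R)]
    linarith [abs_sub_le s t t₀]
  have hd := hsol R t (hmem (hR t (by simp)))
  rw [← hagree (hself t) (hR t (by simp))] at hd
  refine hd.congr_of_eventuallyEq ?_
  filter_upwards [Metric.ball_mem_nhds t one_pos] with s hs
  exact hagree (hself s) (hR s hs)

theorem exists_isIntegralCurve_eqOn_Iio [CompleteSpace E] {y : ℝ → E} {t₁ : ℝ}
    (hy : ∀ t < t₁, HasDerivAt y (A t (y t)) t) :
    ∃ x : ℝ → E, IsIntegralCurve x (fun t => A t) ∧ EqOn x y (Iio t₁) := by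
  obtain ⟨x, hx₀, hx⟩ := exists_isIntegralCurve A (t₁ - 1) (y (t₁ - 1))
  refine ⟨x, hx, fun t ht => ?_⟩
  have hI : t₁ - 1 ∈ Ioo (min t (t₁ - 1) - 1) t₁ :=
    ⟨by linarith [min_le_right t (t₁ - 1)], by linarith⟩
  exact eqOn_Ioo_of_hasDerivAt hI (fun s _ => hx s) (fun s hs => hy s hs.2) hx₀
    ⟨by linarith [min_le_left t (t₁ - 1)], ht⟩

end LinearODE

noncomputable def companion (V : ℝ → ℝ) (hV : Continuous V) : C(ℝ, ℝ × ℝ →L[ℝ] ℝ × ℝ) where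
  toFun t := (ContinuousLinearMap.snd ℝ ℝ ℝ).prod (-V t • ContinuousLinearMap.fst ℝ ℝ ℝ)
  continuous_toFun := (ContinuousLinearMap.prodₗᵢ ℝ).continuous.comp
    (continuous_const.prodMk (hV.neg.smul continuous_const))

@[simp]
lemma companion_apply {V : ℝ → ℝ} {hV : Continuous V} (t : ℝ) (x : ℝ × ℝ) :
    companion V hV t x = (x.2, -V t * x.1) := rfl

namespace IsIntegralCurve

variable {V : ℝ → ℝ} {hV : Continuous V} {z : ℝ → ℝ × ℝ}

lemma hasDerivAt_fst_companion (hz : IsIntegralCurve z fun t => companion V hV t) (t : ℝ) :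
    HasDerivAt (fun s => (z s).1) (z t).2 t :=
  (hasFDerivAt_fst (𝕜 := ℝ) (p := z t)).comp_hasDerivAt t (hz t)

lemma hasDerivAt_snd_companion (hz : IsIntegralCurve z fun t => companion V hV t) (t : ℝ) :
    HasDerivAt (fun s => (z s).2) (-V t * (z t).1) t :=
  (hasFDerivAt_snd (𝕜 := ℝ) (p := z t)).comp_hasDerivAt t (hz t)

lemma deriv_fst_companion (hz : IsIntegralCurve z fun t => companion V hV t) :
    deriv (fun s => (z s).1) = fun s => (z s).2 :=
  funext fun t => (hz.hasDerivAt_fst_companion t).deriv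

lemma deriv_deriv_fst_companion (hz : IsIntegralCurve z fun t => companion V hV t) (t : ℝ) :
    deriv (deriv fun s => (z s).1) t = -V t * (z t).1 := by
  rw [hz.deriv_fst_companion]
  exact (hz.hasDerivAt_snd_companion t).deriv

lemma contDiff_two_fst_companion (hz : IsIntegralCurve z fun t => companion V hV t) :
    ContDiff ℝ 2 fun s => (z s).1 := by
  rw [show (2 : WithTop ℕ∞) = 1 + 1 from rfl, contDiff_succ_iff_deriv, hz.deriv_fst_companion,
    contDiff_one_iff_deriv, funext fun t => (hz.hasDerivAt_snd_companion t).deriv]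
  exact ⟨fun t => (hz.hasDerivAt_fst_companion t).differentiableAt, by simp,
    fun t => (hz.hasDerivAt_snd_companion t).differentiableAt, hV.neg.mul hz.continuous.fst⟩

end IsIntegralCurve

lemma integral_Iic_eq_add_intervalIntegral {g : ℝ → ℝ} (hg : Integrable g) (u : ℝ) :
    ∫ s in Iic u, g s = (∫ s in Iic 0, g s) + ∫ s in 0..u, g s :=
  eq_add_of_sub_eq' (intervalIntegral.integral_Iic_sub_Iic hg.integrableOn hg.integrableOn)

lemma continuous_integral_Iic {g : ℝ → ℝ} (hg : Integrable g) :
    Continuous fun u => ∫ s in Iic u, g s := by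
  rw [funext (integral_Iic_eq_add_intervalIntegral hg)]
  exact continuous_const.add
    (intervalIntegral.continuous_primitive (fun _ _ => hg.intervalIntegrable) 0)

lemma hasDerivAt_integral_Iic {g : ℝ → ℝ} (hg : Integrable g) {t : ℝ} (ht : ContinuousAt g t) :
    HasDerivAt (fun u => ∫ s in Iic u, g s) (g t) t := by
  rw [funext (integral_Iic_eq_add_intervalIntegral hg)]
  exact (intervalIntegral.integral_hasDerivAt_right hg.intervalIntegrable
    hg.aestronglyMeasurable.stronglyMeasurableAtFilter ht).const_add (∫ s in Iic 0, g s)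

lemma abs_mul_cos_add_mul_sin_le (α β x y : ℝ) : |α * cos x + β * sin y| ≤ |α| + |β| := by
  refine (abs_add_le _ _).trans ?_
  rw [abs_mul, abs_mul]
  exact add_le_add (mul_le_of_le_one_right (abs_nonneg α) (abs_cos_le_one x))
    (mul_le_of_le_one_right (abs_nonneg β) (abs_sin_le_one y))

noncomputable def moment (k p f : ℝ → ℝ) (t : ℝ) : ℝ := ∫ s in Iic t, k s * (p s * f s)

section Moment

variable {k p : ℝ → ℝ}

lemma integrable_moment_integrand (hk : Continuous k) (hk1 : ∀ s, |k s| ≤ 1) (hp : Integrable p)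
    (f : ℝ →ᵇ ℝ) : Integrable fun s => k s * (p s * f s) :=
  (hp.mul_bdd f.continuous.aestronglyMeasurable
    (ae_of_all _ fun s => f.norm_coe_le_norm s)).bdd_mul hk.aestronglyMeasurable
    (ae_of_all _ fun s => by simpa using hk1 s)

lemma abs_moment_le (hk1 : ∀ s, |k s| ≤ 1) (hp : Integrable p) (f : ℝ →ᵇ ℝ) (t : ℝ) :
    |moment k p f t| ≤ (∫ s in Iic t, |p s|) * ‖f‖ := by
  rw [moment, ← integral_mul_const, ← Real.norm_eq_abs]
  refine norm_integral_le_of_norm_le (hp.abs.integrableOn.mul_const _) (ae_of_all _ fun s => ?_)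
  rw [norm_mul, norm_mul, Real.norm_eq_abs, Real.norm_eq_abs, ← one_mul (|p s| * ‖f‖)]
  gcongr
  · exact hk1 s
  · exact f.norm_coe_le_norm s

lemma moment_sub (hk : Continuous k) (hk1 : ∀ s, |k s| ≤ 1) (hp : Integrable p)
    (f g : ℝ →ᵇ ℝ) (t : ℝ) : moment k p f t - moment k p g t = moment k p ⇑(f - g) t := by
  rw [moment, moment, moment, ← integral_sub
    (integrable_moment_integrand hk hk1 hp f).integrableOn
    (integrable_moment_integrand hk hk1 hp g).integrableOn]
  simp only [BoundedContinuousFunction.coe_sub, Pi.sub_apply, mul_sub]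

lemma continuous_moment (hk : Continuous k) (hk1 : ∀ s, |k s| ≤ 1) (hp : Integrable p)
    (f : ℝ →ᵇ ℝ) : Continuous (moment k p f) :=
  continuous_integral_Iic (integrable_moment_integrand hk hk1 hp f)

lemma hasDerivAt_moment (hk : Continuous k) (hk1 : ∀ s, |k s| ≤ 1) (hp : Integrable p)
    (f : ℝ →ᵇ ℝ) {t : ℝ} (ht : ContinuousAt p t) :
    HasDerivAt (moment k p f) (k t * (p t * f t)) t :=
  hasDerivAt_integral_Iic (integrable_moment_integrand hk hk1 hp f)
    (hk.continuousAt.mul (ht.mul f.continuous.continuousAt))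

end Moment

/-- `ω⁻¹ ∫_{-∞}^t sin (ω (t - s)) p s f s ds`, with the sine of the difference expanded so that
the dependence on `t` sits outside the integrals. -/
noncomputable def duhamel (ω : ℝ) (p f : ℝ → ℝ) (t : ℝ) : ℝ :=
  (sin (ω * t) * moment (fun s => cos (ω * s)) p f t -
    cos (ω * t) * moment (fun s => sin (ω * s)) p f t) / ω

noncomputable def duhamelDeriv (ω : ℝ) (p f : ℝ → ℝ) (t : ℝ) : ℝ :=
  cos (ω * t) * moment (fun s => cos (ω * s)) p f t +
    sin (ω * t) * moment (fun s => sin (ω * s)) p f t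

section Duhamel

variable {ω : ℝ} {p : ℝ → ℝ}

lemma continuous_duhamel (hp : Integrable p) (f : ℝ →ᵇ ℝ) : Continuous (duhamel ω p f) := by
  unfold duhamel
  have := continuous_moment (by fun_prop) (fun s => abs_cos_le_one (ω * s)) hp f
  have := continuous_moment (by fun_prop) (fun s => abs_sin_le_one (ω * s)) hp f
  fun_prop

lemma abs_duhamel_le (hω : 0 < ω) (hp : Integrable p) (f : ℝ →ᵇ ℝ) (t : ℝ) :
    |duhamel ω p f t| ≤ 2 * ((∫ s in Iic t, |p s|) * ‖f‖) / ω := by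
  rw [duhamel, abs_div, abs_of_pos hω]
  set C := moment (fun s => cos (ω * s)) p f t
  set S := moment (fun s => sin (ω * s)) p f t
  have hC : |C| ≤ _ := abs_moment_le (fun s => abs_cos_le_one (ω * s)) hp f t
  have hS : |S| ≤ _ := abs_moment_le (fun s => abs_sin_le_one (ω * s)) hp f t
  rw [show sin (ω * t) * C - cos (ω * t) * S = -S * cos (ω * t) + C * sin (ω * t) by ring]
  gcongr
  linarith [abs_mul_cos_add_mul_sin_le (-S) C (ω * t) (ω * t), abs_neg S]

lemma abs_duhamelDeriv_le (hp : Integrable p) (f : ℝ →ᵇ ℝ) (t : ℝ) :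
    |duhamelDeriv ω p f t| ≤ 2 * ((∫ s in Iic t, |p s|) * ‖f‖) := by
  rw [duhamelDeriv]
  set C := moment (fun s => cos (ω * s)) p f t
  set S := moment (fun s => sin (ω * s)) p f t
  have hC : |C| ≤ _ := abs_moment_le (fun s => abs_cos_le_one (ω * s)) hp f t
  have hS : |S| ≤ _ := abs_moment_le (fun s => abs_sin_le_one (ω * s)) hp f t
  rw [mul_comm (cos _), mul_comm (sin _)]
  linarith [abs_mul_cos_add_mul_sin_le C S (ω * t) (ω * t)]

lemma duhamel_sub (hp : Integrable p) (f g : ℝ →ᵇ ℝ) (t : ℝ) :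
    duhamel ω p f t - duhamel ω p g t = duhamel ω p ⇑(f - g) t := by
  simp only [duhamel, ← moment_sub (by fun_prop) (fun s => abs_cos_le_one (ω * s)) hp f g,
    ← moment_sub (by fun_prop) (fun s => abs_sin_le_one (ω * s)) hp f g]
  ring

lemma hasDerivAt_sin_mul (ω t : ℝ) :
    HasDerivAt (fun s => sin (ω * s)) (ω * cos (ω * t)) t := by
  simpa [mul_comm] using ((hasDerivAt_id' t).const_mul ω).sin

lemma hasDerivAt_cos_mul (ω t : ℝ) :
    HasDerivAt (fun s => cos (ω * s)) (-(ω * sin (ω * t))) t := by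
  simpa [mul_comm] using ((hasDerivAt_id' t).const_mul ω).cos

lemma hasDerivAt_duhamel (hω : ω ≠ 0) (hp : Integrable p) (f : ℝ →ᵇ ℝ) {t : ℝ}
    (ht : ContinuousAt p t) : HasDerivAt (duhamel ω p f) (duhamelDeriv ω p f t) t := by
  have hc := hasDerivAt_moment (by fun_prop) (fun s => abs_cos_le_one (ω * s)) hp f ht
  have hs := hasDerivAt_moment (by fun_prop) (fun s => abs_sin_le_one (ω * s)) hp f ht
  refine ((((hasDerivAt_sin_mul ω t).mul hc).sub ((hasDerivAt_cos_mul ω t).mul hs)).div_const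
    ω).congr_deriv ?_
  simp only [duhamelDeriv]
  field_simp
  ring

lemma hasDerivAt_duhamelDeriv (hp : Integrable p) (f : ℝ →ᵇ ℝ) {t : ℝ}
    (ht : ContinuousAt p t) :
    HasDerivAt (duhamelDeriv ω p f) (p t * f t - ω ^ 2 * duhamel ω p f t) t := by
  have hc := hasDerivAt_moment (by fun_prop) (fun s => abs_cos_le_one (ω * s)) hp f ht
  have hs := hasDerivAt_moment (by fun_prop) (fun s => abs_sin_le_one (ω * s)) hp f ht
  refine (((hasDerivAt_cos_mul ω t).mul hc).add ((hasDerivAt_sin_mul ω t).mul hs)).congr_deriv ?_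
  simp only [duhamel]
  field_simp
  linear_combination (p t * f t) * sin_sq_add_cos_sq (ω * t)

lemma hasDerivAt_of_eq_add_duhamel (hω : ω ≠ 0) (hp : Integrable p) {α β : ℝ} {w : ℝ →ᵇ ℝ}
    (hw : ∀ t, w t = α * cos (ω * t) + β * sin (ω * t) + duhamel ω p w t) {t : ℝ}
    (ht : ContinuousAt p t) :
    HasDerivAt (fun s => (w s, ω * (β * cos (ω * s) - α * sin (ω * s)) + duhamelDeriv ω p w s))
      (ω * (β * cos (ω * t) - α * sin (ω * t)) + duhamelDeriv ω p w t,
        p t * w t - ω ^ 2 * w t) t := by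
  have hc := hasDerivAt_cos_mul ω t
  have hs := hasDerivAt_sin_mul ω t
  refine HasDerivAt.prodMk ?_ ?_
  · refine ((((hc.const_mul α).add (hs.const_mul β)).add
      (hasDerivAt_duhamel hω hp w ht)).congr_deriv ?_).congr_of_eventuallyEq (.of_forall hw)
    ring
  · refine ((((hc.const_mul β).sub (hs.const_mul α)).const_mul ω).add
      (hasDerivAt_duhamelDeriv hp w ht)).congr_deriv ?_
    rw [hw t]
    ring

lemma tendsto_duhamel_atBot (hω : 0 < ω) (hp : Integrable p) (f : ℝ →ᵇ ℝ) :
    Tendsto (duhamel ω p f) atBot (𝓝 0) := by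
  refine squeeze_zero_norm (fun t => (Real.norm_eq_abs _).trans_le (abs_duhamel_le hω hp f t)) ?_
  simpa using (((tendsto_integral_Iic_zero (f := fun s => |p s|) tendsto_id).mul_const
    ‖f‖).const_mul 2).div_const ω

lemma setIntegral_Iic_abs_le_integral_abs (hp : Integrable p) (t : ℝ) :
    ∫ s in Iic t, |p s| ≤ ∫ s, |p s| :=
  setIntegral_le_integral hp.abs (ae_of_all _ fun s => abs_nonneg (p s))

theorem exists_eq_add_duhamel (hω : 0 < ω) (hp : Integrable p) (hsmall : ∫ s, |p s| ≤ ω / 4)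
    (α β : ℝ) :
    ∃ w : ℝ →ᵇ ℝ, ∀ t, w t = α * cos (ω * t) + β * sin (ω * t) + duhamel ω p w t := by
  have hbound (f : ℝ →ᵇ ℝ) (t : ℝ) : |duhamel ω p f t| ≤ ‖f‖ / 2 :=
    calc |duhamel ω p f t| ≤ 2 * ((∫ s in Iic t, |p s|) * ‖f‖) / ω := abs_duhamel_le hω hp f t
      _ ≤ 2 * (ω / 4 * ‖f‖) / ω := by
        gcongr; exact (setIntegral_Iic_abs_le_integral_abs hp t).trans hsmall
      _ = ‖f‖ / 2 := by field_simp; ring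
  let T (f : ℝ →ᵇ ℝ) : ℝ →ᵇ ℝ :=
    .ofNormedAddCommGroup (fun t => α * cos (ω * t) + β * sin (ω * t) + duhamel ω p f t)
      (by have := continuous_duhamel (ω := ω) hp f; fun_prop) (|α| + |β| + ‖f‖ / 2) fun t => by
        rw [Real.norm_eq_abs]
        exact (abs_add_le _ _).trans (add_le_add (abs_mul_cos_add_mul_sin_le _ _ _ _) (hbound f t))
  have hT : ContractingWith (1 / 2) T := by
    refine ⟨by rw [← NNReal.coe_lt_coe]; norm_num, LipschitzWith.of_dist_le_mul fun f g => ?_⟩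
    refine (BoundedContinuousFunction.dist_le (by positivity)).2 fun t => ?_
    calc dist (T f t) (T g t) = |duhamel ω p ⇑(f - g) t| := by
          simp only [T, coe_ofNormedAddCommGroup, Real.dist_eq, ← duhamel_sub hp]
          ring_nf
      _ ≤ ‖f - g‖ / 2 := hbound (f - g) t
      _ = _ := by rw [dist_eq_norm]; push_cast; ring
  have : Nonempty (ℝ →ᵇ ℝ) := ⟨0⟩
  exact ⟨ContractingWith.fixedPoint T hT, fun t =>
    (congrArg (· t) (ContractingWith.fixedPoint_isFixedPt hT)).symm⟩

end Duhamel

theorem exists_companion_solution_Iio {V : ℝ → ℝ} (hV : Continuous V) {ω t₁ : ℝ} (hω : 0 < ω)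
    (hq : IntegrableOn (fun t => V t - ω ^ 2) (Iic t₁))
    (hsmall : ∫ t in Iic t₁, |V t - ω ^ 2| ≤ ω / 4) (α β : ℝ) :
    ∃ y : ℝ → ℝ × ℝ, (∀ t < t₁, HasDerivAt y (companion V hV t (y t)) t) ∧
      (∃ B, ∀ t, ‖y t‖ ≤ B) ∧
      Tendsto (fun t => (y t).1 - (α * cos (ω * t) + β * sin (ω * t))) atBot (𝓝 0) := by
  -- Cut off at `t₁`, the perturbation is integrable on `ℝ`; the equation `w'' + ω² w = p w`
  -- is the given one only on `(-∞, t₁)`.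
  set p := indicator (Iic t₁) fun t => ω ^ 2 - V t
  have hp : Integrable p := (integrable_indicator_iff measurableSet_Iic).2
    (hq.neg.congr_fun (fun t _ => neg_sub _ _) measurableSet_Iic)
  have hpsmall : ∫ t, |p t| ≤ ω / 4 := by
    simp_rw [p, ← Real.norm_eq_abs, norm_indicator_eq_indicator_norm,
      integral_indicator measurableSet_Iic, Real.norm_eq_abs, abs_sub_comm (ω ^ 2)]
    exact hsmall
  obtain ⟨w, hw⟩ := exists_eq_add_duhamel hω hp hpsmall α β
  refine ⟨fun t => (w t, ω * (β * cos (ω * t) - α * sin (ω * t)) + duhamelDeriv ω p w t),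
    fun t ht => ?_, ⟨‖w‖ + ω * (|α| + |β|) + 2 * ((∫ s, |p s|) * ‖w‖), fun t => ?_⟩, ?_⟩
  · have hpt : p =ᶠ[𝓝 t] fun t => ω ^ 2 - V t :=
      eventuallyEq_of_mem (Iio_mem_nhds ht) fun s hs => indicator_of_mem (mem_Iic.2 hs.le) _
    refine (hasDerivAt_of_eq_add_duhamel hω.ne' hp hw
      (ContinuousAt.congr (by fun_prop) hpt.symm)).congr_deriv ?_
    rw [companion_apply, Filter.EventuallyEq.eq_of_nhds hpt]
    ext <;> simp only
    ring
  · have hw₁ : |w t| ≤ ‖w‖ := by simpa using w.norm_coe_le_norm t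
    have hfree : |ω * (β * cos (ω * t) - α * sin (ω * t))| ≤ ω * (|α| + |β|) := by
      rw [abs_mul, abs_of_pos hω, sub_eq_add_neg, ← neg_mul, add_comm |α|, ← abs_neg α]
      gcongr
      exact abs_mul_cos_add_mul_sin_le _ _ _ _
    have hD : |duhamelDeriv ω p w t| ≤ 2 * ((∫ s, |p s|) * ‖w‖) :=
      (abs_duhamelDeriv_le hp w t).trans (mul_le_mul_of_nonneg_left (mul_le_mul_of_nonneg_right
        (setIntegral_Iic_abs_le_integral_abs hp t) (norm_nonneg w)) zero_le_two)
    have : 0 ≤ ω * (|α| + |β|) := by positivity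
    have : 0 ≤ ∫ s, |p s| := integral_nonneg fun s => abs_nonneg (p s)
    have : 0 ≤ 2 * ((∫ s, |p s|) * ‖w‖) := by positivity
    refine norm_prod_le_iff.2 ⟨?_, ?_⟩ <;> simp only [Real.norm_eq_abs]
    · linarith
    · linarith [abs_add_le (ω * (β * cos (ω * t) - α * sin (ω * t))) (duhamelDeriv ω p w t),
        norm_nonneg w]
  · refine (tendsto_duhamel_atBot hω hp w).congr fun t => ?_
    show _ = w t - _
    rw [hw t]
    ring

lemma exists_lt_setIntegral_Iic_abs_le (q : ℝ → ℝ) (t₀ : ℝ) {ε : ℝ} (hε : 0 < ε) :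
    ∃ t₁ < t₀, ∫ s in Iic t₁, |q s| ≤ ε :=
  ((eventually_lt_atBot t₀).and
    ((tendsto_integral_Iic_zero (f := fun s => |q s|) tendsto_id).eventually
      (ge_mem_nhds hε))).exists

lemma Continuous.exists_norm_le_Iio {E : Type*} [NormedAddCommGroup E] {z : ℝ → E}
    (hz : Continuous z) {t₁ B : ℝ} (hB : ∀ t < t₁, ‖z t‖ ≤ B) (t₀ : ℝ) :
    ∃ M, ∀ t < t₀, ‖z t‖ ≤ M := by
  obtain ⟨C, hC⟩ := isCompact_Icc.exists_bound_of_continuousOn (s := Icc t₁ t₀) hz.continuousOn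
  refine ⟨max B C, fun t ht => ?_⟩
  rcases lt_or_ge t t₁ with h | h
  · exact (hB t h).trans (le_max_left _ _)
  · exact (hC t ⟨h, ht.le⟩).trans (le_max_right _ _)

theorem exists_solution_tendsto {V : ℝ → ℝ} (hV : Continuous V) {ω t₀ : ℝ} (hω : 0 < ω)
    (hq : IntegrableOn (fun t => V t - ω ^ 2) (Iio t₀)) (α β : ℝ) :
    ∃ w : ℝ → ℝ, ContDiff ℝ 2 w ∧ (∀ t, deriv (deriv w) t + V t * w t = 0) ∧
      Tendsto (fun t => w t - (α * cos (ω * t) + β * sin (ω * t))) atBot (𝓝 0) ∧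
      ∃ M, ∀ t < t₀, |w t| ≤ M ∧ |deriv w t| ≤ M := by
  obtain ⟨t₁, ht₁, hsmall⟩ :=
    exists_lt_setIntegral_Iic_abs_le (fun t => V t - ω ^ 2) t₀ (by positivity : 0 < ω / 4)
  obtain ⟨y, hy, ⟨B, hB⟩, hlim⟩ := exists_companion_solution_Iio hV hω
    (hq.mono_set (Iic_subset_Iio.2 ht₁)) hsmall α β
  obtain ⟨z, hz, hzy⟩ := LinearODE.exists_isIntegralCurve_eqOn_Iio hy
  obtain ⟨M, hM⟩ := hz.continuous.exists_norm_le_Iio (fun t ht => hzy ht ▸ hB t) t₀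
  refine ⟨fun t => (z t).1, hz.contDiff_two_fst_companion,
    fun t => by rw [hz.deriv_deriv_fst_companion]; ring, ?_, M, fun t ht => ⟨?_, ?_⟩⟩
  · refine hlim.congr' ?_
    filter_upwards [Iio_mem_atBot t₁] with t ht
    rw [hzy ht]
  · exact (norm_fst_le (z t)).trans (hM t ht)
  · rw [hz.deriv_fst_companion]
    exact (norm_snd_le (z t)).trans (hM t ht)

theorem Function.Periodic.eq_of_tendsto_atBot {X : Type*} [TopologicalSpace X] [T2Space X]
    {f : ℝ → X} {c : ℝ} {L : X} (hf : Function.Periodic f c) (hc : 0 < c)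
    (h : Tendsto f atBot (𝓝 L)) (x : ℝ) : f x = L := by
  have hseq : Tendsto (fun n : ℕ => x - n * c) atTop atBot := by
    simp_rw [sub_eq_add_neg]
    exact tendsto_atBot_add_const_left _ x
      (tendsto_neg_atTop_atBot.comp (tendsto_natCast_atTop_atTop.atTop_mul_const hc))
  exact tendsto_nhds_unique (tendsto_const_nhds.congr fun n => (hf.sub_nat_mul_eq n).symm)
    (h.comp hseq)

lemma eq_zero_of_tendsto_cos_sin {ω α β : ℝ} (hω : 0 < ω)
    (h : Tendsto (fun t => α * cos (ω * t) + β * sin (ω * t)) atBot (𝓝 0)) : α = 0 ∧ β = 0 := by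
  have hper : Function.Periodic (fun t => α * cos (ω * t) + β * sin (ω * t)) (2 * π / ω) :=
    fun t => by simp only [mul_add, mul_div_cancel₀ _ hω.ne', cos_add_two_pi, sin_add_two_pi]
  have h0 := hper.eq_of_tendsto_atBot (by positivity) h
  have hα := h0 0
  have hβ := h0 (π / 2 / ω)
  rw [mul_div_cancel₀ _ hω.ne', cos_pi_div_two, sin_pi_div_two] at hβ
  simp only [mul_zero, cos_zero, sin_zero] at hα
  constructor <;> linarith

lemma ne_const_mul_of_tendsto_cos_sin {ω : ℝ} (hω : 0 < ω) {f g : ℝ → ℝ}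
    (hf : Tendsto (fun t => f t - cos (ω * t)) atBot (𝓝 0))
    (hg : Tendsto (fun t => g t - sin (ω * t)) atBot (𝓝 0)) (a : ℝ) :
    (f ≠ fun t => a * g t) ∧ (g ≠ fun t => a * f t) := by
  constructor
  · rintro rfl
    have h := (hg.const_mul a).sub hf
    rw [mul_zero, sub_zero] at h
    exact one_ne_zero (eq_zero_of_tendsto_cos_sin (α := 1) (β := -a) hω
      (h.congr fun t => by ring)).1
  · rintro rfl
    have h := (hf.const_mul a).sub hg
    rw [mul_zero, sub_zero] at h
    exact one_ne_zero (eq_zero_of_tendsto_cos_sin (α := -a) (β := 1) hω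
      (h.congr fun t => by ring)).2

theorem stmt6_general (lam eta c t0 : ℝ) (hlam : 0 < lam) (heta : 0 < eta)
    (V : ℝ → ℝ) (hV : ContDiff ℝ (⊤ : ℕ∞) V)
    (hVb : ∀ t < t0, |V t - lam ^ 2| ≤ c * Real.exp (eta * t)) :
    ∃ wp wm : ℝ → ℝ,
      ContDiff ℝ 2 wp ∧ ContDiff ℝ 2 wm ∧
      (∀ t : ℝ, deriv (deriv wp) t + V t * wp t = 0) ∧
      (∀ t : ℝ, deriv (deriv wm) t + V t * wm t = 0) ∧
      (∀ a : ℝ, wp ≠ fun t => a * wm t) ∧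
      (∀ a : ℝ, wm ≠ fun t => a * wp t) ∧
      Filter.Tendsto (fun t => wp t - Real.cos (lam * t)) Filter.atBot (nhds 0) ∧
      Filter.Tendsto (fun t => wm t - Real.sin (lam * t)) Filter.atBot (nhds 0) ∧
      ∃ M : ℝ, ∀ t < t0,
        |wp t| ≤ M ∧ |wm t| ≤ M ∧ |deriv wp t| ≤ M ∧ |deriv wm t| ≤ M := by
  have hq : IntegrableOn (fun t => V t - lam ^ 2) (Iio t0) :=
    (IntegrableOn.mono_set (by exact (integrableOn_exp_mul_Iic heta t0).const_mul c)
      Iio_subset_Iic_self).mono'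
      (hV.continuous.sub continuous_const).aestronglyMeasurable
      ((ae_restrict_mem measurableSet_Iio).mono fun t ht =>
        (Real.norm_eq_abs _).trans_le (hVb t ht))
  obtain ⟨wp, hwp, hwp', hwplim, Mp, hMp⟩ := exists_solution_tendsto hV.continuous hlam hq 1 0
  obtain ⟨wm, hwm, hwm', hwmlim, Mm, hMm⟩ := exists_solution_tendsto hV.continuous hlam hq 0 1
  simp only [one_mul, zero_mul, add_zero, zero_add] at hwplim hwmlim
  have hindep := ne_const_mul_of_tendsto_cos_sin hlam hwplim hwmlim
  refine ⟨wp, wm, hwp, hwm, hwp', hwm', fun a => (hindep a).1, fun a => (hindep a).2, hwplim,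
    hwmlim, max Mp Mm, fun t ht => ?_⟩
  obtain ⟨h1, h2⟩ := hMp t ht
  obtain ⟨h3, h4⟩ := hMm t ht
  exact ⟨h1.trans (le_max_left _ _), h3.trans (le_max_right _ _), h2.trans (le_max_left _ _),
    h4.trans (le_max_right _ _)⟩

/-- oscillatory regime `V → +λ²`: a fundamental system
asymptotic to `cos(λ t)` and `sin(λ t)` at `-∞`, bounded with bounded
derivatives on `(-∞, t₀)`. -/
theorem stmt6 (lam eta c t0 : ℝ) (hlam : 0 < lam) (heta : 0 < eta) (hc : 0 < c)
    (V : ℝ → ℝ) (hV : ContDiff ℝ (⊤ : ℕ∞) V)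
    (hVb : ∀ t < t0, |V t - lam ^ 2| ≤ c * Real.exp (eta * t)) :
    ∃ wp wm : ℝ → ℝ,
      ContDiff ℝ 2 wp ∧ ContDiff ℝ 2 wm ∧
      (∀ t : ℝ, deriv (deriv wp) t + V t * wp t = 0) ∧
      (∀ t : ℝ, deriv (deriv wm) t + V t * wm t = 0) ∧
      (∀ a : ℝ, wp ≠ fun t => a * wm t) ∧
      (∀ a : ℝ, wm ≠ fun t => a * wp t) ∧
      Filter.Tendsto (fun t => wp t - Real.cos (lam * t)) Filter.atBot (nhds 0) ∧
      Filter.Tendsto (fun t => wm t - Real.sin (lam * t)) Filter.atBot (nhds 0) ∧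
      ∃ M : ℝ, ∀ t < t0,
        |wp t| ≤ M ∧ |wm t| ≤ M ∧ |deriv wp t| ≤ M ∧ |deriv wm t| ≤ M :=
  stmt6_general lam eta c t0 hlam heta V hV hVb
end

section
/- Let λ > 0, η > 0, c > 0 and t₀ ∈ ℝ, and let V : ℝ → ℝ be a smooth function satisfying |V(t) − λ²| ≤ c·exp(η·t) for all t < t₀. Then every twice continuously differentiable solution w : ℝ → ℝ of w''(t) + V(t)·w(t) = 0 is bounded, together with its derivative, on the interval (−∞, t₀); that is, there exists M > 0 with |w(t)| + |w'(t)| ≤ M for all t ≤ t₀. -/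
/-!
The energy `E = w'² + λ² w²` is conserved when `V ≡ λ²`; in general
`E' = 2 w' w (λ² - V)`, and `2 λ |w'| |w| ≤ E` gives `E' ≥ -(c/λ) e^{ηt} E` for `t < t₀`.
Hence `E · exp ((c / (λη)) e^{ηt})` is nondecreasing on `(-∞, t₀]`; the integrating factor
lies between `1` and its value at `t₀`, so `E` is bounded there, and so are `|w|` and `|w'|`.
-/

open Real Set

section Gronwall

variable {E E' φ k : ℝ → ℝ} {t0 : ℝ}

theorem monotoneOn_mul_exp_of_neg_mul_le_deriv (hE : ∀ t, HasDerivAt E (E' t) t)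
    (hφ : ∀ t, HasDerivAt φ (k t) t) (hEk : ∀ t < t0, -(k t * E t) ≤ E' t) :
    MonotoneOn (fun t => E t * exp (φ t)) (Iic t0) := by
  have hG : ∀ t, HasDerivAt (fun t => E t * exp (φ t)) ((E' t + k t * E t) * exp (φ t)) t :=
    fun t => ((hE t).mul (hφ t).exp).congr_deriv (by ring)
  refine monotoneOn_of_deriv_nonneg (convex_Iic t0)
    (fun t _ => (hG t).continuousAt.continuousWithinAt)
    (fun t _ => (hG t).differentiableAt.differentiableWithinAt) fun t ht => ?_
  rw [interior_Iic] at ht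
  rw [(hG t).deriv]
  exact mul_nonneg (by linarith [hEk t ht]) (exp_pos _).le

theorem le_mul_exp_of_neg_mul_le_deriv (hE : ∀ t, HasDerivAt E (E' t) t)
    (hφ : ∀ t, HasDerivAt φ (k t) t) (hEk : ∀ t < t0, -(k t * E t) ≤ E' t)
    (hE0 : ∀ t, 0 ≤ E t) (hφ0 : ∀ t, 0 ≤ φ t) {t : ℝ} (ht : t ≤ t0) :
    E t ≤ E t0 * exp (φ t0) :=
  calc E t ≤ E t * exp (φ t) := le_mul_of_one_le_right (hE0 t) (one_le_exp (hφ0 t))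
    _ ≤ E t0 * exp (φ t0) :=
      monotoneOn_mul_exp_of_neg_mul_le_deriv hE hφ hEk ht self_mem_Iic ht

end Gronwall

theorem neg_abs_div_mul_le_two_mul_mul_mul {lam : ℝ} (hlam : 0 < lam) (a b d : ℝ) :
    -(|d| / lam * (a ^ 2 + lam ^ 2 * b ^ 2)) ≤ 2 * a * b * d := by
  have hamgm : 2 * |a| * (lam * |b|) ≤ a ^ 2 + lam ^ 2 * b ^ 2 := by
    nlinarith [two_mul_le_add_sq |a| (lam * |b|), sq_abs a, sq_abs b]
  have hprod : |2 * a * b * d| ≤ |d| / lam * (a ^ 2 + lam ^ 2 * b ^ 2) :=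
    calc |2 * a * b * d| = |d| / lam * (2 * |a| * (lam * |b|)) := by
          simp only [abs_mul, abs_two]; field_simp
      _ ≤ |d| / lam * (a ^ 2 + lam ^ 2 * b ^ 2) := by gcongr
  linarith [neg_abs_le (2 * a * b * d)]

theorem abs_add_abs_le_of_sq_add_mul_sq_le {lam a b B : ℝ} (hlam : 0 < lam)
    (h : a ^ 2 + lam ^ 2 * b ^ 2 ≤ B) : |b| + |a| ≤ √B * (1 + 1 / lam) := by
  have ha : |a| ≤ √B := abs_le_sqrt (by nlinarith [sq_nonneg b])
  have hb : lam * |b| ≤ √B := by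
    rw [← abs_of_pos hlam, ← abs_mul]
    exact abs_le_sqrt (by nlinarith [sq_nonneg a])
  have hb' : |b| ≤ √B / lam := by rw [le_div_iff₀ hlam]; linarith
  calc |b| + |a| ≤ √B / lam + √B := add_le_add hb' ha
    _ = √B * (1 + 1 / lam) := by ring

noncomputable def oscEnergy (lam : ℝ) (w : ℝ → ℝ) (t : ℝ) : ℝ := deriv w t ^ 2 + lam ^ 2 * w t ^ 2

theorem oscEnergy_nonneg (lam : ℝ) (w : ℝ → ℝ) (t : ℝ) : 0 ≤ oscEnergy lam w t :=
  add_nonneg (sq_nonneg _) (mul_nonneg (sq_nonneg _) (sq_nonneg _))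

theorem hasDerivAt_oscEnergy {w V : ℝ → ℝ} (lam : ℝ) (hw : ContDiff ℝ 2 w)
    (hode : ∀ t, deriv (deriv w) t + V t * w t = 0) (t : ℝ) :
    HasDerivAt (oscEnergy lam w) (2 * deriv w t * w t * (lam ^ 2 - V t)) t := by
  have hw1 : Differentiable ℝ w := hw.differentiable (by norm_num)
  have hw2 : Differentiable ℝ (deriv w) :=
    (hw.iterate_deriv' 1 1).differentiable (by norm_num)
  have hw'' : deriv (deriv w) t = -(V t * w t) := by linarith [hode t]
  refine (((hw2 t).hasDerivAt.pow 2).add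
    (((hw1 t).hasDerivAt.pow 2).const_mul (lam ^ 2))).congr_deriv ?_
  rw [hw'']
  push_cast
  ring

theorem hasDerivAt_const_mul_exp_mul {a eta : ℝ} (heta : eta ≠ 0) (t : ℝ) :
    HasDerivAt (fun s => a / eta * exp (eta * s)) (a * exp (eta * t)) t :=
  ((((hasDerivAt_id t).const_mul eta).exp).const_mul (a / eta)).congr_deriv (by field_simp; simp)

theorem stmt7_general (lam eta c t0 : ℝ) (hlam : 0 < lam) (heta : 0 < eta) (hc : 0 < c)
    (V : ℝ → ℝ)
    (hVb : ∀ t < t0, |V t - lam ^ 2| ≤ c * Real.exp (eta * t))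
    (w : ℝ → ℝ) (hw : ContDiff ℝ 2 w)
    (hode : ∀ t : ℝ, deriv (deriv w) t + V t * w t = 0) :
    ∃ M : ℝ, 0 < M ∧ ∀ t ≤ t0, |w t| + |deriv w t| ≤ M := by
  have hφ := hasDerivAt_const_mul_exp_mul (a := c / lam) heta.ne'
  have hEk : ∀ t < t0, -(c / lam * exp (eta * t) * oscEnergy lam w t)
      ≤ 2 * deriv w t * w t * (lam ^ 2 - V t) := fun t ht => by
    have hd : |lam ^ 2 - V t| / lam ≤ c / lam * exp (eta * t) := by
      rw [abs_sub_comm, div_mul_eq_mul_div]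
      exact div_le_div_of_nonneg_right (hVb t ht) hlam.le
    have hdE := mul_le_mul_of_nonneg_right hd (oscEnergy_nonneg lam w t)
    have := neg_abs_div_mul_le_two_mul_mul_mul hlam (deriv w t) (w t) (lam ^ 2 - V t)
    unfold oscEnergy at *
    linarith
  set B := oscEnergy lam w t0 * exp (c / lam / eta * exp (eta * t0))
  refine ⟨√B * (1 + 1 / lam) + 1, by positivity, fun t ht => ?_⟩
  have hE := le_mul_exp_of_neg_mul_le_deriv (hasDerivAt_oscEnergy lam hw hode) hφ hEk
    (oscEnergy_nonneg lam w) (fun t => by positivity) ht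
  linarith [abs_add_abs_le_of_sq_add_mul_sq_le hlam hE]

/-- oscillatory regime: every solution is bounded together
with its derivative on `(-∞, t₀]`. -/
theorem stmt7 (lam eta c t0 : ℝ) (hlam : 0 < lam) (heta : 0 < eta) (hc : 0 < c)
    (V : ℝ → ℝ) (hV : ContDiff ℝ (⊤ : ℕ∞) V)
    (hVb : ∀ t < t0, |V t - lam ^ 2| ≤ c * Real.exp (eta * t))
    (w : ℝ → ℝ) (hw : ContDiff ℝ 2 w)
    (hode : ∀ t : ℝ, deriv (deriv w) t + V t * w t = 0) :
    ∃ M : ℝ, 0 < M ∧ ∀ t ≤ t0, |w t| + |deriv w t| ≤ M :=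
  stmt7_general lam eta c t0 hlam heta hc V hVb w hw hode
end

section
/- Let λ > 0, η > 0, c > 0 and t₀ ∈ ℝ, and let V : ℝ → ℝ be a smooth function satisfying |V(t) − λ²| ≤ c·exp(η·t) for all t < t₀. If w : ℝ → ℝ is a twice continuously differentiable solution of w''(t) + V(t)·w(t) = 0 such that w(t) → 0 as t → −∞, then w is identically zero on ℝ. -/
/-!
The energy `E = w'² + λ² w²` satisfies `E' = 2 w w' (λ² - V)`, hence `|E'| ≤ (|λ² - V| / λ) E`.
Near `-∞` the coefficient is at most `(c / λ) e^{η t}`, which is integrable there, so the Grönwall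
quantity `E · exp (-(c / (λ η)) e^{η t})` is antitone; since `w → 0` forces `w'' = -V w → 0` and
then `w' → 0`, it tends to `0` at `-∞`, so `E` vanishes on `(-∞, t₀]`. The same Grönwall argument
with the bound of `|λ² - V|` on a compact interval propagates `E = 0` forward.
-/

open Filter Set Real Topology

theorem tendsto_atBot_of_abs_sub_le_mul_exp {f : ℝ → ℝ} {L c eta t0 : ℝ} (heta : 0 < eta)
    (hf : ∀ t < t0, |f t - L| ≤ c * exp (eta * t)) : Tendsto f atBot (𝓝 L) := by
  have hexp : Tendsto (fun t => c * exp (eta * t)) atBot (𝓝 0) := by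
    simpa using (tendsto_exp_atBot.comp (tendsto_id.const_mul_atBot heta)).const_mul c
  refine tendsto_iff_norm_sub_tendsto_zero.2 (squeeze_zero_norm' ?_ hexp)
  filter_upwards [eventually_lt_atBot t0] with t ht
  simpa using hf t ht

theorem abs_deriv_le_of_abs_deriv_deriv_le {f : ℝ → ℝ} (hf : Differentiable ℝ f)
    (hf' : Differentiable ℝ (deriv f)) {a B : ℝ}
    (hB : ∀ x ∈ Icc a (a + 1), |deriv (deriv f) x| ≤ B) :
    |deriv f a| ≤ |f (a + 1)| + |f a| + B := by
  obtain ⟨ξ, hξ, hslope⟩ := exists_deriv_eq_slope f (lt_add_one a) hf.continuous.continuousOn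
    hf.differentiableOn
  have hξ_eq : deriv f ξ = f (a + 1) - f a := by simpa using hslope
  have hξ_mem : ξ ∈ Icc a (a + 1) := Ioo_subset_Icc_self hξ
  have hdiff : |deriv f ξ - deriv f a| ≤ B * |ξ - a| :=
    (convex_Icc a (a + 1)).norm_image_sub_le_of_norm_deriv_le (fun x _ => hf' x) hB
      (left_mem_Icc.2 (by linarith)) hξ_mem
  have hB0 : 0 ≤ B := (abs_nonneg _).trans (hB a (left_mem_Icc.2 (by linarith)))
  have hξa : |ξ - a| ≤ 1 := by rw [abs_le]; constructor <;> linarith [hξ.1, hξ.2]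
  calc |deriv f a| ≤ |deriv f ξ| + |deriv f ξ - deriv f a| := by
        linarith [abs_sub_abs_le_abs_sub (deriv f a) (deriv f ξ),
          abs_sub_comm (deriv f a) (deriv f ξ)]
    _ ≤ |f (a + 1)| + |f a| + B := by
        have hsecant := hξ_eq ▸ abs_sub (f (a + 1)) (f a)
        linarith [hdiff.trans (mul_le_of_le_one_right hB0 hξa)]

theorem tendsto_deriv_atBot_of_tendsto_deriv_deriv {f : ℝ → ℝ} (hf : Differentiable ℝ f)
    (hf' : Differentiable ℝ (deriv f)) (h0 : Tendsto f atBot (𝓝 0))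
    (h2 : Tendsto (deriv (deriv f)) atBot (𝓝 0)) : Tendsto (deriv f) atBot (𝓝 0) := by
  rw [Metric.tendsto_nhds] at h0 h2 ⊢
  intro ε hε
  obtain ⟨N₀, hN₀⟩ := eventually_atBot.1 (h0 (ε / 3) (by positivity))
  obtain ⟨N₂, hN₂⟩ := eventually_atBot.1 (h2 (ε / 3) (by positivity))
  refine eventually_atBot.2 ⟨min N₀ N₂ - 1, fun t ht => ?_⟩
  have hmin₀ := min_le_left N₀ N₂
  have hmin₂ := min_le_right N₀ N₂
  have hbound := abs_deriv_le_of_abs_deriv_deriv_le hf hf' (a := t) (B := ε / 3) fun x hx =>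
    by simpa using (hN₂ x (by linarith [hx.2])).le
  have ht₁ := hN₀ (t + 1) (by linarith)
  have ht₀ := hN₀ t (by linarith)
  simp only [Real.dist_eq, sub_zero] at ht₀ ht₁ ⊢
  linarith

theorem antitoneOn_mul_exp_neg_of_deriv_le {E E' Φ Φ' : ℝ → ℝ} {s : Set ℝ} (hs : Convex ℝ s)
    (hE : ∀ x, HasDerivAt E (E' x) x) (hΦ : ∀ x, HasDerivAt Φ (Φ' x) x)
    (hle : ∀ x ∈ interior s, E' x ≤ Φ' x * E x) :
    AntitoneOn (fun x => E x * exp (-Φ x)) s := by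
  have hG : ∀ x, HasDerivAt (fun x => E x * exp (-Φ x))
      (exp (-Φ x) * (E' x - Φ' x * E x)) x := fun x =>
    ((hE x).fun_mul (hΦ x).fun_neg.exp).congr_deriv (by ring)
  refine antitoneOn_of_hasDerivWithinAt_nonpos hs
    (fun x _ => (hG x).continuousAt.continuousWithinAt) (fun x _ => (hG x).hasDerivWithinAt)
    fun x hx => ?_
  exact mul_nonpos_of_nonneg_of_nonpos (exp_pos _).le (sub_nonpos.2 (hle x hx))

noncomputable def energy (lam : ℝ) (w : ℝ → ℝ) (t : ℝ) : ℝ := deriv w t ^ 2 + lam ^ 2 * w t ^ 2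

section Energy

variable {lam : ℝ} {V w : ℝ → ℝ}

theorem energy_nonneg (lam : ℝ) (w : ℝ → ℝ) (t : ℝ) : 0 ≤ energy lam w t := by
  unfold energy; positivity

theorem eq_zero_of_energy_eq_zero (hlam : lam ≠ 0) {t : ℝ} (h : energy lam w t = 0) : w t = 0 := by
  unfold energy at h
  have : lam ^ 2 * w t ^ 2 = 0 := by nlinarith [sq_nonneg (deriv w t), sq_nonneg (lam * w t)]
  simpa [hlam] using this

theorem tendsto_energy_atBot (hw : Differentiable ℝ w) (hw' : Differentiable ℝ (deriv w))
    (h0 : Tendsto w atBot (𝓝 0)) (h2 : Tendsto (deriv (deriv w)) atBot (𝓝 0)) :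
    Tendsto (energy lam w) atBot (𝓝 0) := by
  have h1 := tendsto_deriv_atBot_of_tendsto_deriv_deriv hw hw' h0 h2
  show Tendsto (fun t => deriv w t ^ 2 + lam ^ 2 * w t ^ 2) atBot (𝓝 0)
  simpa using (h1.pow 2).add ((h0.pow 2).const_mul (lam ^ 2))

theorem hasDerivAt_energy (hw : Differentiable ℝ w) (hw' : Differentiable ℝ (deriv w)) {t : ℝ}
    (hode : deriv (deriv w) t + V t * w t = 0) :
    HasDerivAt (energy lam w) (2 * w t * deriv w t * (lam ^ 2 - V t)) t := by
  refine (((hw' t).hasDerivAt.fun_pow 2).fun_add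
    (((hw t).hasDerivAt.fun_pow 2).const_mul (lam ^ 2))).congr_deriv ?_
  rw [eq_neg_of_add_eq_zero_left hode]
  push_cast
  ring

theorem two_mul_mul_abs_mul_le_energy (t : ℝ) :
    2 * lam * |w t * deriv w t| ≤ energy lam w t := by
  have h := two_mul_le_add_sq (lam * |w t|) |deriv w t|
  rw [mul_pow, sq_abs, sq_abs] at h
  rw [abs_mul]
  unfold energy
  linarith

theorem energy_deriv_le (hlam : 0 < lam) {t k : ℝ} (hk : |lam ^ 2 - V t| ≤ k) :
    2 * w t * deriv w t * (lam ^ 2 - V t) ≤ k / lam * energy lam w t := by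
  rw [div_mul_eq_mul_div, le_div_iff₀ hlam]
  calc 2 * w t * deriv w t * (lam ^ 2 - V t) * lam
      ≤ |lam ^ 2 - V t| * (2 * lam * |w t * deriv w t|) := by
        refine (le_abs_self _).trans_eq ?_
        simp only [abs_mul, abs_two, abs_of_pos hlam]
        ring
    _ ≤ k * energy lam w t :=
        mul_le_mul hk (two_mul_mul_abs_mul_le_energy t) (by positivity) ((abs_nonneg _).trans hk)

variable (hw : Differentiable ℝ w) (hw' : Differentiable ℝ (deriv w))
  (hode : ∀ t, deriv (deriv w) t + V t * w t = 0)
include hw hw' hode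

theorem energy_eq_zero_of_le {eta c t0 : ℝ} (hlam : 0 < lam) (heta : 0 < eta)
    (hV : ∀ t < t0, |V t - lam ^ 2| ≤ c * exp (eta * t))
    (hE : Tendsto (energy lam w) atBot (𝓝 0)) {s : ℝ} (hs : s ≤ t0) : energy lam w s = 0 := by
  set Φ : ℝ → ℝ := fun x => c / (lam * eta) * exp (eta * x)
  have hΦ : ∀ x, HasDerivAt Φ (c * exp (eta * x) / lam) x := fun x =>
    ((((hasDerivAt_id x).const_mul eta).exp).const_mul (c / (lam * eta))).congr_deriv
      (by simp only [id]; field_simp)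
  have hanti : AntitoneOn (fun x => energy lam w x * exp (-Φ x)) (Iic t0) :=
    antitoneOn_mul_exp_neg_of_deriv_le (convex_Iic t0) (fun x => hasDerivAt_energy hw hw' (hode x))
      hΦ fun x hx => energy_deriv_le hlam <| by
        rw [abs_sub_comm]; exact hV x (by simpa using hx)
  have hΦ0 : Tendsto Φ atBot (𝓝 0) := by
    simpa using (tendsto_exp_atBot.comp (tendsto_id.const_mul_atBot heta)).const_mul
      (c / (lam * eta))
  have hG : Tendsto (fun x => energy lam w x * exp (-Φ x)) atBot (𝓝 0) := by
    simpa using hE.mul ((continuous_exp.tendsto _).comp hΦ0.neg)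
  have hGs : energy lam w s * exp (-Φ s) ≤ 0 :=
    ge_of_tendsto hG (eventually_atBot.2 ⟨s, fun u hu => hanti (hu.trans hs) hs hu⟩)
  exact le_antisymm (nonpos_of_mul_nonpos_left hGs (exp_pos _)) (energy_nonneg lam w s)

theorem energy_eq_zero_of_ge (hlam : 0 < lam) (hV : Continuous V) {a b : ℝ} (hab : a ≤ b)
    (ha : energy lam w a = 0) : energy lam w b = 0 := by
  obtain ⟨M, hM⟩ := (isCompact_Icc (a := a) (b := b)).exists_bound_of_continuousOn
    (f := fun t => lam ^ 2 - V t) (continuous_const.sub hV).continuousOn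
  have hΦ : ∀ x, HasDerivAt (fun x => M / lam * x) (M / lam) x := fun x => by
    simpa using (hasDerivAt_id x).const_mul (M / lam)
  have hanti : AntitoneOn (fun x => energy lam w x * exp (-(M / lam * x))) (Icc a b) :=
    antitoneOn_mul_exp_neg_of_deriv_le (convex_Icc a b) (fun x => hasDerivAt_energy hw hw' (hode x))
      hΦ fun x hx => energy_deriv_le hlam (hM x (interior_subset hx))
  have hGb := hanti ⟨le_rfl, hab⟩ ⟨hab, le_rfl⟩ hab
  dsimp only at hGb
  rw [ha, zero_mul] at hGb
  exact le_antisymm (nonpos_of_mul_nonpos_left hGb (exp_pos _)) (energy_nonneg lam w b)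

end Energy

theorem stmt8_general (lam eta c t0 : ℝ) (hlam : 0 < lam) (heta : 0 < eta)
    (V : ℝ → ℝ) (hV : ContDiff ℝ (⊤ : ℕ∞) V)
    (hVb : ∀ t < t0, |V t - lam ^ 2| ≤ c * Real.exp (eta * t))
    (w : ℝ → ℝ) (hw : ContDiff ℝ 2 w)
    (hode : ∀ t : ℝ, deriv (deriv w) t + V t * w t = 0)
    (hdec : Filter.Tendsto w Filter.atBot (nhds 0)) :
    ∀ t : ℝ, w t = 0 := by
  have hw₁ : Differentiable ℝ w := hw.differentiable (by norm_num)
  have hw₂ : Differentiable ℝ (deriv w) := by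
    simpa using hw.differentiable_iteratedDeriv 1 (by norm_num)
  have hw'' : Tendsto (deriv (deriv w)) atBot (𝓝 0) := by
    have hV_lim := tendsto_atBot_of_abs_sub_le_mul_exp heta hVb
    rw [funext fun t => eq_neg_of_add_eq_zero_left (hode t)]
    simpa using (hV_lim.mul hdec).neg
  have hE_le : ∀ s ≤ t0, energy lam w s = 0 := fun s hs =>
    energy_eq_zero_of_le hw₁ hw₂ hode hlam heta hVb (tendsto_energy_atBot hw₁ hw₂ hdec hw'') hs
  intro t
  apply eq_zero_of_energy_eq_zero hlam.ne'
  rcases le_total t t0 with ht | ht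
  · exact hE_le t ht
  · exact energy_eq_zero_of_ge hw₁ hw₂ hode hlam hV.continuous ht (hE_le t0 le_rfl)

/-- oscillatory regime: a solution decaying at `-∞` is
identically zero. -/
theorem stmt8 (lam eta c t0 : ℝ) (hlam : 0 < lam) (heta : 0 < eta) (hc : 0 < c)
    (V : ℝ → ℝ) (hV : ContDiff ℝ (⊤ : ℕ∞) V)
    (hVb : ∀ t < t0, |V t - lam ^ 2| ≤ c * Real.exp (eta * t))
    (w : ℝ → ℝ) (hw : ContDiff ℝ 2 w)
    (hode : ∀ t : ℝ, deriv (deriv w) t + V t * w t = 0)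
    (hdec : Filter.Tendsto w Filter.atBot (nhds 0)) :
    ∀ t : ℝ, w t = 0 :=
  stmt8_general lam eta c t0 hlam heta V hV hVb w hw hode hdec
end

section
/- Let λ > 0 and t₀ ∈ ℝ, and let q : ℝ → ℝ be a continuous function with ∫_{−∞}^{t₀} |q(ζ)| dζ < ∞. If x : (−∞, t₀] → ℝ is continuous and satisfies the Volterra integral equation x(t) = 1 + ∫_t^{t₀} x(ζ)·q(ζ)·(1 − exp(−2λ·(ζ − t)))/(2λ) dζ for all t ≤ t₀, then |x(t)| ≤ exp( (1/(2λ))·∫_{−∞}^{t₀} |q(ζ)| dζ ) for all t ≤ t₀; in particular x is bounded on (−∞, t₀]. -/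
/-!
The Volterra equation and `0 ≤ (1 - exp (-2λ(ζ - t))) / (2λ) ≤ 1 / (2λ)` for `ζ ≥ t` give
`|x u| ≤ 1 + ∫_u^{t₀} k |x|` with `k = |q| / (2λ)`. Backward Gronwall: the function
`u ↦ (1 + ∫_u^{t₀} k |x|) · exp (-∫_u^{t₀} k)` has derivative
`k · exp (-∫_u^{t₀} k) · (1 + ∫_u^{t₀} k |x| - |x u|) ≥ 0` and equals `1` at `t₀`, hence
`|x t| ≤ exp (∫_t^{t₀} k) ≤ exp ((1 / (2λ)) ∫_{-∞}^{t₀} |q|)`.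
-/

open MeasureTheory intervalIntegral Set Real

section BackwardGronwall

variable {f φ k : ℝ → ℝ} {a b c : ℝ}

theorem hasDerivAt_integral_left_of_continuousOn (hf : ContinuousOn f (Icc a b)) {u : ℝ}
    (hu : u ∈ Ioo a b) : HasDerivAt (fun v => ∫ ζ in v..b, f ζ) (-f u) u :=
  integral_hasDerivAt_left
    ((hf.mono (Icc_subset_Icc_left hu.1.le)).intervalIntegrable_of_Icc hu.2.le)
    ((hf.mono Ioo_subset_Icc_self).stronglyMeasurableAtFilter isOpen_Ioo u hu)
    (hf.continuousAt (Icc_mem_nhds hu.1 hu.2))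

theorem continuousOn_integral_left_of_continuousOn (hab : a ≤ b) (hf : ContinuousOn f (Icc a b)) :
    ContinuousOn (fun v => ∫ ζ in v..b, f ζ) (Icc a b) := by
  have hfi : IntegrableOn f (uIcc a b) := by
    simpa only [uIcc_of_le hab] using hf.integrableOn_compact isCompact_Icc
  simpa only [uIcc_of_le hab] using continuousOn_primitive_interval_left hfi

theorem le_mul_exp_integral_of_le_add_integral (hab : a ≤ b) (hφ : ContinuousOn φ (Icc a b))
    (hk : ContinuousOn k (Icc a b)) (hk0 : ∀ u ∈ Icc a b, 0 ≤ k u)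
    (h : ∀ u ∈ Icc a b, φ u ≤ c + ∫ ζ in u..b, k ζ * φ ζ) :
    φ a ≤ c * exp (∫ ζ in a..b, k ζ) := by
  set G := fun u => ∫ ζ in u..b, k ζ * φ ζ
  set H := fun u => ∫ ζ in u..b, k ζ
  set ψ := fun u => (c + G u) * exp (-H u)
  have hψ' : ∀ u ∈ Ioo a b, HasDerivAt ψ (k u * exp (-H u) * (c + G u - φ u)) u := by
    intro u hu
    have hG := hasDerivAt_integral_left_of_continuousOn (hk.mul hφ) hu
    have hH := hasDerivAt_integral_left_of_continuousOn hk hu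
    refine ((hG.const_add c).mul hH.neg.exp).congr_deriv ?_
    simp only [Pi.mul_apply, Pi.neg_apply, G, H]
    ring
  have hψ_mono : MonotoneOn ψ (Icc a b) := by
    refine monotoneOn_of_deriv_nonneg (convex_Icc a b) ?_ ?_ ?_
    · exact (continuousOn_const.add (continuousOn_integral_left_of_continuousOn hab
        (hk.mul hφ))).mul (continuousOn_integral_left_of_continuousOn hab hk).neg.rexp
    · rw [interior_Icc]
      exact fun u hu => (hψ' u hu).differentiableAt.differentiableWithinAt
    · rw [interior_Icc]
      intro u hu
      rw [(hψ' u hu).deriv]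
      have hφu := h u (Ioo_subset_Icc_self hu)
      exact mul_nonneg (mul_nonneg (hk0 u (Ioo_subset_Icc_self hu)) (exp_pos _).le)
        (by linarith)
  have hψ_ab : (c + G a) * exp (-H a) ≤ c := by
    simpa [ψ, G, H] using hψ_mono (left_mem_Icc.2 hab) (right_mem_Icc.2 hab) hab
  calc φ a ≤ c + G a := h a (left_mem_Icc.2 hab)
    _ ≤ c * exp (H a) := by
      rwa [exp_neg, ← div_eq_mul_inv, div_le_iff₀ (exp_pos _)] at hψ_ab

end BackwardGronwall

theorem abs_volterraKernel_le {lam t ζ : ℝ} (hlam : 0 < lam) (h : t ≤ ζ) :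
    |(1 - exp (-(2 * lam) * (ζ - t))) / (2 * lam)| ≤ 1 / (2 * lam) := by
  have hexp : exp (-(2 * lam) * (ζ - t)) ≤ 1 := exp_le_one_iff.2 (by nlinarith)
  rw [abs_div, abs_of_pos (by positivity : 0 < 2 * lam)]
  gcongr
  rw [abs_le]
  constructor <;> linarith [exp_pos (-(2 * lam) * (ζ - t))]

theorem abs_le_one_add_integral_of_volterra {lam u t0 : ℝ} {q x : ℝ → ℝ} (hlam : 0 < lam)
    (hu : u ≤ t0)
    (hint : IntervalIntegrable (fun ζ => |q ζ| / (2 * lam) * |x ζ|) volume u t0)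
    (heq : x u =
      1 + ∫ ζ in u..t0, x ζ * q ζ * (1 - exp (-(2 * lam) * (ζ - u))) / (2 * lam)) :
    |x u| ≤ 1 + ∫ ζ in u..t0, |q ζ| / (2 * lam) * |x ζ| := by
  have hbound := norm_integral_le_of_norm_le hu (μ := volume)
    (f := fun ζ => x ζ * q ζ * (1 - exp (-(2 * lam) * (ζ - u))) / (2 * lam))
    (Filter.Eventually.of_forall fun ζ hζ => by
      rw [Real.norm_eq_abs, mul_div_assoc, abs_mul, abs_mul]
      calc _ ≤ |x ζ| * |q ζ| * (1 / (2 * lam)) := by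
            gcongr; exact abs_volterraKernel_le hlam hζ.1.le
        _ = |q ζ| / (2 * lam) * |x ζ| := by ring) hint
  rw [heq]
  exact (abs_add_le _ _).trans (by rw [abs_one, ← Real.norm_eq_abs]; linarith)

theorem intervalIntegral_le_setIntegral_Iic {g : ℝ → ℝ} {a b : ℝ} (hab : a ≤ b)
    (hg : IntegrableOn g (Iic b)) (hg0 : ∀ ζ, 0 ≤ g ζ) :
    ∫ ζ in a..b, g ζ ≤ ∫ ζ in Iic b, g ζ := by
  rw [integral_of_le hab]
  exact setIntegral_mono_set hg (Filter.Eventually.of_forall hg0)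
    Ioc_subset_Iic_self.eventuallyLE

/-- Gronwall bound for the Volterra integral equation
associated to `w'' + V w = 0`, `V = -λ² + q`. -/
theorem stmt9 (lam t0 : ℝ) (hlam : 0 < lam)
    (q : ℝ → ℝ) (hq : Continuous q)
    (hqi : MeasureTheory.IntegrableOn (fun ζ => |q ζ|) (Set.Iic t0))
    (x : ℝ → ℝ) (hx : ContinuousOn x (Set.Iic t0))
    (heq : ∀ t ≤ t0, x t =
      1 + ∫ ζ in t..t0, x ζ * q ζ * (1 - Real.exp (-(2 * lam) * (ζ - t))) / (2 * lam)) :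
    ∀ t ≤ t0, |x t| ≤ Real.exp ((1 / (2 * lam)) * ∫ ζ in Set.Iic t0, |q ζ|) := by
  intro t ht
  have hk : ContinuousOn (fun ζ => |q ζ| / (2 * lam)) (Icc t t0) :=
    (hq.abs.div_const _).continuousOn
  have hxt : ContinuousOn (fun ζ => |x ζ|) (Icc t t0) := (hx.mono Icc_subset_Iic_self).abs
  have hgronwall := le_mul_exp_integral_of_le_add_integral ht hxt hk (fun u _ => by positivity)
    fun u hu => abs_le_one_add_integral_of_volterra hlam hu.2
      (((hk.mul hxt).mono (Icc_subset_Icc_left hu.1)).intervalIntegrable_of_Icc hu.2) (heq u hu.2)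
  calc |x t| ≤ 1 * exp (∫ ζ in t..t0, |q ζ| / (2 * lam)) := hgronwall
    _ ≤ exp ((1 / (2 * lam)) * ∫ ζ in Iic t0, |q ζ|) := by
      rw [one_mul, intervalIntegral.integral_div, one_div_mul_eq_div]
      gcongr
      exact intervalIntegral_le_setIntegral_Iic ht hqi fun ζ => abs_nonneg _
end

section
/- Let λ > 0, η > 0, c > 0 and t₀ ∈ ℝ, and let q : ℝ → ℝ be a continuous function with |q(t)| ≤ c·exp(η·t) for all t ≤ t₀. If x : (−∞, t₀] → ℝ is continuous and satisfies the Volterra integral equation x(t) = 1 + ∫_t^{t₀} x(ζ)·q(ζ)·(1 − exp(−2λ·(ζ − t)))/(2λ) dζ for all t ≤ t₀, then x(t) converges to a finite limit as t → −∞. -/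
open MeasureTheory Real Filter Set Topology

/-!
The kernel `(1 - exp (-2λ (ζ - t))) / (2λ)` lies in `[0, 1/(2λ)]` for `t ≤ ζ`, so `|x|` satisfies a
Volterra inequality `|x t| ≤ 1 + ∫_t^{t₀} w ζ |x ζ| dζ` with the integrable weight
`w ζ = c e^{ηζ} / (2λ)`. Choose `t₁` with `∫_{-∞}^{t₁} w ≤ 1/2`; at a point where `|x|` is maximal
on `[t, t₁]` the inequality reads `S ≤ 1 + S/2 + C`, so `x` is bounded. The integrands are then
dominated by a multiple of `w` and the kernel tends to `1/(2λ)` as `t → -∞`, so by dominated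
convergence `x t → 1 + ∫_{-∞}^{t₀} x q / (2λ)`.
-/

theorem uIcc_subset_Iic {α : Type*} [Lattice α] {a b c : α} (ha : a ≤ c) (hb : b ≤ c) :
    uIcc a b ⊆ Iic c :=
  fun _ hx => hx.2.trans (sup_le ha hb)

theorem tendsto_setIntegral_Iic_atBot {E : Type*} [NormedAddCommGroup E] [NormedSpace ℝ E]
    {w : ℝ → E} {b : ℝ} (hw : IntegrableOn w (Iic b)) :
    Tendsto (fun t => ∫ ζ in Iic t, w ζ) atBot (𝓝 0) := by
  have h := (tendsto_const_nhds (x := ∫ ζ in Iic b, w ζ)).sub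
    (intervalIntegral_tendsto_integral_Iic b hw tendsto_id)
  rw [sub_self] at h
  refine h.congr' ?_
  filter_upwards [eventually_le_atBot b] with t ht
  rw [id, ← intervalIntegral.integral_Iic_sub_Iic (hw.mono_set (Iic_subset_Iic.2 ht)) hw,
    sub_sub_cancel]

section VolterraInequality

variable {u w : ℝ → ℝ} {a b : ℝ}

theorem le_two_mul_of_le_add_intervalIntegral (hu : ContinuousOn u (Iic b))
    (hu0 : ∀ t ≤ b, 0 ≤ u t) (hw : IntegrableOn w (Iic b)) (hw0 : ∀ t ≤ b, 0 ≤ w t)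
    (h : ∀ t ≤ b, u t ≤ a + ∫ ζ in t..b, w ζ * u ζ) {t₁ : ℝ} (ht₁ : t₁ ≤ b)
    (hsmall : ∫ ζ in Iic t₁, w ζ ≤ 1 / 2) {t : ℝ} (ht : t ≤ t₁) :
    u t ≤ 2 * (a + ∫ ζ in t₁..b, w ζ * u ζ) := by
  have hwu : ∀ s s', s ≤ b → s' ≤ b →
      IntervalIntegrable (fun ζ => w ζ * u ζ) volume s s' := fun s s' hs hs' =>
    (hw.mono_set (uIcc_subset_Iic hs hs')).intervalIntegrable.mul_continuousOn
      (hu.mono (uIcc_subset_Iic hs hs'))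
  obtain ⟨τ, ⟨htτ, hτ₁⟩, hτmax⟩ := isCompact_Icc.exists_isMaxOn (nonempty_Icc.2 ht)
    (hu.mono (Icc_subset_Iic_self.trans (Iic_subset_Iic.2 ht₁)))
  have hτb : τ ≤ b := hτ₁.trans ht₁
  have hw_tail : ∫ ζ in τ..t₁, w ζ ≤ 1 / 2 := by
    refine le_trans ?_ hsmall
    rw [intervalIntegral.integral_of_le hτ₁]
    refine setIntegral_mono_set (hw.mono_set (Iic_subset_Iic.2 ht₁)) ?_
      Ioc_subset_Iic_self.eventuallyLE
    exact (ae_restrict_iff' measurableSet_Iic).2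
      (Eventually.of_forall fun ζ hζ => hw0 ζ (le_trans hζ ht₁))
  have hwu_tail : ∫ ζ in τ..t₁, w ζ * u ζ ≤ u τ * (1 / 2) := by
    calc ∫ ζ in τ..t₁, w ζ * u ζ ≤ ∫ ζ in τ..t₁, u τ * w ζ := by
          refine intervalIntegral.integral_mono_on hτ₁ (hwu τ t₁ hτb ht₁)
            ((hw.mono_set (uIcc_subset_Iic hτb ht₁)).intervalIntegrable.const_mul _)
            fun ζ hζ => ?_
          rw [mul_comm]
          exact mul_le_mul_of_nonneg_right (hτmax ⟨htτ.trans hζ.1, hζ.2⟩)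
            (hw0 ζ (hζ.2.trans ht₁))
      _ = u τ * ∫ ζ in τ..t₁, w ζ := intervalIntegral.integral_const_mul _ _
      _ ≤ u τ * (1 / 2) := mul_le_mul_of_nonneg_left hw_tail (hu0 τ hτb)
  have hτ : u τ ≤ a + (u τ * (1 / 2) + ∫ ζ in t₁..b, w ζ * u ζ) := by
    calc u τ ≤ a + ∫ ζ in τ..b, w ζ * u ζ := h τ hτb
      _ = a + ((∫ ζ in τ..t₁, w ζ * u ζ) + ∫ ζ in t₁..b, w ζ * u ζ) := by
        rw [intervalIntegral.integral_add_adjacent_intervals (hwu τ t₁ hτb ht₁)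
          (hwu t₁ b ht₁ le_rfl)]
      _ ≤ a + (u τ * (1 / 2) + ∫ ζ in t₁..b, w ζ * u ζ) := by gcongr
  linarith [isMaxOn_iff.1 hτmax t ⟨le_rfl, ht⟩]

theorem exists_bound_of_le_add_intervalIntegral (hu : ContinuousOn u (Iic b))
    (hu0 : ∀ t ≤ b, 0 ≤ u t) (hw : IntegrableOn w (Iic b)) (hw0 : ∀ t ≤ b, 0 ≤ w t)
    (h : ∀ t ≤ b, u t ≤ a + ∫ ζ in t..b, w ζ * u ζ) :
    ∃ B, ∀ t ≤ b, u t ≤ B := by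
  obtain ⟨t₁, hsmall, ht₁⟩ : ∃ t₁, ∫ ζ in Iic t₁, w ζ < 1 / 2 ∧ t₁ ≤ b :=
    (((tendsto_setIntegral_Iic_atBot hw).eventually (gt_mem_nhds one_half_pos)).and
      (eventually_le_atBot b)).exists
  obtain ⟨τ, -, hτmax⟩ := isCompact_Icc.exists_isMaxOn (nonempty_Icc.2 ht₁)
    (hu.mono Icc_subset_Iic_self)
  refine ⟨max (2 * (a + ∫ ζ in t₁..b, w ζ * u ζ)) (u τ), fun t htb => ?_⟩
  rcases le_total t t₁ with ht | ht
  · exact le_max_of_le_left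
      (le_two_mul_of_le_add_intervalIntegral hu hu0 hw hw0 h ht₁ hsmall.le ht)
  · exact le_max_of_le_right (isMaxOn_iff.1 hτmax t ⟨ht, htb⟩)

end VolterraInequality

theorem tendsto_intervalIntegral_atBot_of_dominated {E : Type*} [NormedAddCommGroup E]
    [NormedSpace ℝ E] {F : ℝ → ℝ → E} {f : ℝ → E} {bound : ℝ → ℝ} {b : ℝ}
    (hF_meas : ∀ t, AEStronglyMeasurable (F t) (volume.restrict (Iic b)))
    (h_bound : ∀ t, ∀ ζ ∈ Ioc t b, ‖F t ζ‖ ≤ bound ζ)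
    (bound_integrable : IntegrableOn bound (Iic b))
    (h_lim : ∀ ζ ≤ b, Tendsto (fun t => F t ζ) atBot (𝓝 (f ζ))) :
    Tendsto (fun t => ∫ ζ in t..b, F t ζ) atBot (𝓝 (∫ ζ in Iic b, f ζ)) := by
  have h_ind : Tendsto (fun t => ∫ ζ in Iic b, (Ioc t b).indicator (F t) ζ) atBot
      (𝓝 (∫ ζ in Iic b, f ζ)) := by
    refine tendsto_integral_filter_of_dominated_convergence (fun ζ => ‖bound ζ‖)
      (.of_forall fun t => (hF_meas t).indicator measurableSet_Ioc)
      (.of_forall fun t => .of_forall fun ζ => ?_) bound_integrable.norm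
      ((ae_restrict_iff' measurableSet_Iic).2 (.of_forall fun ζ hζ => ?_))
    · by_cases hζ : ζ ∈ Ioc t b
      · rw [indicator_of_mem hζ]
        exact (h_bound t ζ hζ).trans (le_norm_self _)
      · rw [indicator_of_notMem hζ, norm_zero]
        exact norm_nonneg _
    · refine (h_lim ζ hζ).congr' ?_
      filter_upwards [eventually_lt_atBot ζ] with t ht
      rw [indicator_of_mem (show ζ ∈ Ioc t b from ⟨ht, hζ⟩)]
  refine h_ind.congr' ?_
  filter_upwards [eventually_le_atBot b] with t ht
  rw [setIntegral_indicator measurableSet_Ioc, inter_eq_right.2 Ioc_subset_Iic_self,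
    intervalIntegral.integral_of_le ht]

theorem exists_bound_of_eq_add_intervalIntegral {x w : ℝ → ℝ} {F : ℝ → ℝ → ℝ} {a b : ℝ}
    (hx : ContinuousOn x (Iic b)) (hw : IntegrableOn w (Iic b)) (hw0 : ∀ t ≤ b, 0 ≤ w t)
    (hF : ∀ t, ContinuousOn (F t) (Iic b)) (hF_le : ∀ t, ∀ ζ ∈ Icc t b, |F t ζ| ≤ w ζ * |x ζ|)
    (heq : ∀ t ≤ b, x t = a + ∫ ζ in t..b, F t ζ) :
    ∃ B, ∀ t ≤ b, |x t| ≤ B := by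
  refine exists_bound_of_le_add_intervalIntegral (a := |a|) hx.abs (fun _ _ => abs_nonneg _) hw
    hw0 fun t ht => ?_
  have hsub : uIcc t b ⊆ Iic b := uIcc_subset_Iic ht le_rfl
  have hwx : IntervalIntegrable (fun ζ => w ζ * |x ζ|) volume t b :=
    (hw.mono_set hsub).intervalIntegrable.mul_continuousOn (hx.abs.mono hsub)
  calc |x t| = |a + ∫ ζ in t..b, F t ζ| := by rw [heq t ht]
    _ ≤ |a| + ∫ ζ in t..b, |F t ζ| := by
      grw [abs_add_le, intervalIntegral.abs_integral_le_integral_abs ht]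
    _ ≤ |a| + ∫ ζ in t..b, w ζ * |x ζ| := by
      grw [intervalIntegral.integral_mono_on ht ((hF t).mono hsub).intervalIntegrable.abs hwx
        (hF_le t)]

theorem abs_mul_one_sub_exp_neg_div_le {y k s : ℝ} (hk : 0 < k) (hs : 0 ≤ s) :
    |y * (1 - exp (-k * s)) / k| ≤ |y| / k := by
  have hexp : |1 - exp (-k * s)| ≤ 1 :=
    abs_le.2 ⟨by linarith [exp_le_one_iff.2 (by nlinarith : -k * s ≤ 0)],
      by linarith [exp_pos (-k * s)]⟩
  rw [abs_div, abs_mul, abs_of_pos hk]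
  gcongr
  exact mul_le_of_le_one_right (abs_nonneg y) hexp

theorem tendsto_exp_neg_mul_sub_atBot {k : ℝ} (hk : 0 < k) (ζ : ℝ) :
    Tendsto (fun t => exp (-k * (ζ - t))) atBot (𝓝 0) := by
  refine tendsto_exp_atBot.comp ?_
  have := tendsto_atBot_add_const_right atBot (-(k * ζ)) (tendsto_id.const_mul_atBot hk)
  exact this.congr fun t => by simp only [id]; ring

/-- the solution of the Volterra integral equation converges
to a finite limit as `t → -∞` when `q` decays exponentially. -/
theorem stmt10 (lam eta c t0 : ℝ) (hlam : 0 < lam) (heta : 0 < eta) (hc : 0 < c)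
    (q : ℝ → ℝ) (hq : Continuous q)
    (hqb : ∀ t ≤ t0, |q t| ≤ c * Real.exp (eta * t))
    (x : ℝ → ℝ) (hx : ContinuousOn x (Set.Iic t0))
    (heq : ∀ t ≤ t0, x t =
      1 + ∫ ζ in t..t0, x ζ * q ζ * (1 - Real.exp (-(2 * lam) * (ζ - t))) / (2 * lam)) :
    ∃ L : ℝ, Filter.Tendsto x Filter.atBot (nhds L) := by
  set F : ℝ → ℝ → ℝ := fun t ζ => x ζ * q ζ * (1 - exp (-(2 * lam) * (ζ - t))) / (2 * lam)
  set w : ℝ → ℝ := fun ζ => c / (2 * lam) * exp (eta * ζ) with hw_def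
  have hw : IntegrableOn w (Iic t0) := (integrableOn_exp_mul_Iic heta t0).const_mul _
  have hF_cont : ∀ t, ContinuousOn (F t) (Iic t0) := fun t => by fun_prop
  have hF_le : ∀ t, ∀ ζ ∈ Icc t t0, |F t ζ| ≤ w ζ * |x ζ| := by
    rintro t ζ ⟨htζ, hζ⟩
    calc |F t ζ| ≤ |x ζ * q ζ| / (2 * lam) :=
          abs_mul_one_sub_exp_neg_div_le (by positivity) (sub_nonneg.2 htζ)
      _ ≤ |x ζ| * (c * exp (eta * ζ)) / (2 * lam) := by rw [abs_mul]; gcongr; exact hqb ζ hζ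
      _ = w ζ * |x ζ| := by rw [hw_def]; ring
  obtain ⟨B, hB⟩ := exists_bound_of_eq_add_intervalIntegral hx hw (fun _ _ => by positivity)
    hF_cont hF_le heq
  have hlim : ∀ ζ ≤ t0, Tendsto (fun t => F t ζ) atBot (𝓝 (x ζ * q ζ / (2 * lam))) :=
    fun ζ _ => by
      simpa [F] using (((tendsto_const_nhds (x := (1 : ℝ))).sub
        (tendsto_exp_neg_mul_sub_atBot (k := 2 * lam) (by positivity) ζ)).const_mul
          (x ζ * q ζ)).div_const (2 * lam)
  refine ⟨1 + ∫ ζ in Iic t0, x ζ * q ζ / (2 * lam), ?_⟩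
  refine (tendsto_const_nhds.add (tendsto_intervalIntegral_atBot_of_dominated
    (fun t => (hF_cont t).aestronglyMeasurable measurableSet_Iic)
    (fun t ζ hζ => (hF_le t ζ (Ioc_subset_Icc_self hζ)).trans
      (mul_le_mul_of_nonneg_left (hB ζ hζ.2) (by positivity)))
    (hw.mul_const B) hlim)).congr' ?_
  filter_upwards [eventually_le_atBot t0] with t ht
  exact (heq t ht).symm
end

section
/- Let λ > 0, t₀ ∈ ℝ, and let V : (−∞, t₀) → ℝ be continuous. Let w₁ : (−∞, t₀) → ℝ be a twice continuously differentiable function with w₁ > 0 on (−∞, t₀), satisfying w₁''(t) + V(t)·w₁(t) = 0 for all t < t₀ and w₁(t)·exp(λ·t) → 1 as t → −∞. Then for every t < t₀ the integral ∫_{−∞}^t w₁(s)^{−2} ds is finite, the function w₂(t) := w₁(t)·∫_{−∞}^t w₁(s)^{−2} ds is a twice continuously differentiable solution of w₂''(t) + V(t)·w₂(t) = 0 on (−∞, t₀), w₂ is linearly independent from w₁, and w₂(t)·exp(−λ·t) → 1/(2λ) as t → −∞. -/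
/-!
The asymptotics `w₁(t) ~ e^{-λt}` give `w₁(s)⁻² ~ e^{2λs}` at `-∞`; asymptotic equivalence
passes to the tail integrals of a positive comparison function, so `g(t) = ∫_{-∞}^t w₁⁻²` is
finite and `g(t) ~ e^{2λt}/(2λ)`, whence `w₁ g e^{-λt} → 1/(2λ)`. Since `g' = w₁⁻²`, one has
`(w₁ g)'' = w₁'' g`, so `w₁ g` solves the same equation, and it is not proportional to `w₁`
because `g` is strictly increasing.
-/

open Set Filter Asymptotics MeasureTheory Topology Real

theorem Asymptotics.IsLittleO.setIntegral_Iic {E : Type*} [NormedAddCommGroup E]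
    [NormedSpace ℝ E] {f : ℝ → E} {g : ℝ → ℝ} (hg_nonneg : ∀ᶠ s in atBot, 0 ≤ g s)
    (hg : ∀ᶠ t in atBot, IntegrableOn g (Iic t)) (h : f =o[atBot] g) :
    (fun t => ∫ s in Iic t, f s) =o[atBot] fun t => ∫ s in Iic t, g s := by
  refine IsLittleO.of_bound fun c hc => ?_
  obtain ⟨T, hT⟩ := eventually_atBot.1 <| (h.bound hc).and hg_nonneg
  filter_upwards [hg, eventually_le_atBot T] with t hgt htT
  have hle : ∀ s ∈ Iic t, ‖f s‖ ≤ c * g s ∧ 0 ≤ g s := fun s hs => by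
    obtain ⟨hfs, hgs⟩ := hT s (hs.trans htT)
    exact ⟨by rwa [norm_of_nonneg hgs] at hfs, hgs⟩
  calc ‖∫ s in Iic t, f s‖ ≤ ∫ s in Iic t, c * g s :=
        norm_integral_le_of_norm_le (hgt.const_mul c)
          (ae_restrict_of_forall_mem measurableSet_Iic fun s hs => (hle s hs).1)
    _ = c * ‖∫ s in Iic t, g s‖ := by
        rw [integral_const_mul, norm_of_nonneg
          (setIntegral_nonneg measurableSet_Iic fun s hs => (hle s hs).2)]

theorem Asymptotics.IsEquivalent.setIntegral_Iic {f g : ℝ → ℝ}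
    (hg_nonneg : ∀ᶠ s in atBot, 0 ≤ g s) (hf : ∀ᶠ t in atBot, IntegrableOn f (Iic t))
    (hg : ∀ᶠ t in atBot, IntegrableOn g (Iic t)) (h : f ~[atBot] g) :
    (fun t => ∫ s in Iic t, f s) ~[atBot] fun t => ∫ s in Iic t, g s := by
  refine (h.isLittleO.setIntegral_Iic hg_nonneg hg).congr' ?_ EventuallyEq.rfl
  filter_upwards [hf, hg] with t hft hgt
  exact integral_sub hft hgt

theorem isEquivalent_exp_of_tendsto_mul_exp {w : ℝ → ℝ} {lam : ℝ}
    (h : Tendsto (fun t => w t * exp (lam * t)) atBot (𝓝 1)) :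
    w ~[atBot] fun t => exp (-lam * t) :=
  isEquivalent_of_tendsto_one <| h.congr fun t => by simp [div_eq_mul_inv, ← exp_neg]

theorem isEquivalent_inv_sq_exp {w : ℝ → ℝ} {lam : ℝ}
    (h : Tendsto (fun t => w t * exp (lam * t)) atBot (𝓝 1)) :
    (fun s => (w s ^ 2)⁻¹) ~[atBot] fun s => exp (2 * lam * s) := by
  refine ((isEquivalent_exp_of_tendsto_mul_exp h).pow 2).inv.congr_right
    (.of_forall fun s => ?_)
  simp only [Pi.inv_apply, Pi.pow_apply, ← exp_nat_mul, ← exp_neg]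
  ring_nf

theorem integrableOn_Iic_inv_sq {w : ℝ → ℝ} {lam t : ℝ} (hlam : 0 < lam)
    (hw : ContinuousOn w (Iic t)) (hw_ne : ∀ s ≤ t, w s ≠ 0)
    (hlim : Tendsto (fun t => w t * exp (lam * t)) atBot (𝓝 1)) :
    IntegrableOn (fun s => (w s ^ 2)⁻¹) (Iic t) :=
  ((hw.pow 2).inv₀ fun s hs => pow_ne_zero 2 (hw_ne s hs)).locallyIntegrableOn
    measurableSet_Iic |>.integrableOn_of_isBigO_atBot (isEquivalent_inv_sq_exp hlim).isBigO
    ⟨Iic 0, Iic_mem_atBot 0, integrableOn_exp_mul_Iic (by positivity) 0⟩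

theorem hasDerivAt_setIntegral_Iic {E : Type*} [NormedAddCommGroup E] [NormedSpace ℝ E]
    [CompleteSpace E] {f : ℝ → E} {t b : ℝ} (ht : t < b) (hf : IntegrableOn f (Iic b))
    (hft : ContinuousAt f t) : HasDerivAt (fun u => ∫ s in Iic u, f s) (f t) t := by
  have hnhds : Iio b ∈ 𝓝 t := Iio_mem_nhds ht
  have hmeas : StronglyMeasurableAtFilter f (𝓝 t) :=
    ⟨Iio b, hnhds, hf.aestronglyMeasurable.mono_set Iio_subset_Iic_self⟩
  refine ((intervalIntegral.integral_hasDerivAt_right .refl hmeas hft).const_add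
    (∫ s in Iic t, f s)).congr_of_eventuallyEq ?_
  filter_upwards [hnhds] with u hu
  rw [← intervalIntegral.integral_Iic_sub_Iic (hf.mono_set (Iic_subset_Iic.2 ht.le))
    (hf.mono_set (Iic_subset_Iic.2 (le_of_lt hu))), add_sub_cancel]

theorem tendsto_mul_setIntegral_inv_sq_mul_exp {w : ℝ → ℝ} {lam : ℝ} (hlam : 0 < lam)
    (hw : ∀ᶠ t in atBot, IntegrableOn (fun s => (w s ^ 2)⁻¹) (Iic t))
    (hlim : Tendsto (fun t => w t * exp (lam * t)) atBot (𝓝 1)) :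
    Tendsto (fun t => (w t * ∫ s in Iic t, (w s ^ 2)⁻¹) * exp (-lam * t)) atBot
      (𝓝 (1 / (2 * lam))) := by
  have h2lam : 0 < 2 * lam := by positivity
  have hint_equiv : (fun t => ∫ s in Iic t, (w s ^ 2)⁻¹) ~[atBot]
      fun t => exp (2 * lam * t) / (2 * lam) := by
    simpa only [integral_exp_mul_Iic h2lam] using
      (isEquivalent_inv_sq_exp hlim).setIntegral_Iic (.of_forall fun s => (exp_pos _).le) hw
        (.of_forall fun t => integrableOn_exp_mul_Iic h2lam t)
  have hequiv := ((isEquivalent_exp_of_tendsto_mul_exp hlim).mul hint_equiv).mul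
    (IsEquivalent.refl (u := fun t => exp (-lam * t)))
  refine hequiv.symm.tendsto_nhds (tendsto_const_nhds.congr fun t => ?_)
  simp only [Pi.mul_apply]
  rw [mul_div_assoc', div_mul_eq_mul_div, ← exp_add, ← exp_add]
  ring_nf
  rw [exp_zero, mul_one]

section ReductionOfOrder

variable {U : Set ℝ} {w g : ℝ → ℝ}

theorem contDiffOn_two_of_hasDerivAt (hU : IsOpen U) {f : ℝ → ℝ}
    (hg : ∀ t ∈ U, HasDerivAt g (f t) t) (hf : ContDiffOn ℝ 1 f U) : ContDiffOn ℝ 2 g U :=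
  (contDiffOn_succ_iff_deriv_of_isOpen (n := 1) hU).2
    ⟨fun t ht => (hg t ht).differentiableAt.differentiableWithinAt, by simp,
      hf.congr fun t ht => (hg t ht).deriv⟩

theorem contDiffOn_mul_of_hasDerivAt_inv_sq (hU : IsOpen U) (hw : ContDiffOn ℝ 2 w U)
    (hw_ne : ∀ t ∈ U, w t ≠ 0) (hg : ∀ t ∈ U, HasDerivAt g (w t ^ 2)⁻¹ t) :
    ContDiffOn ℝ 2 (fun t => w t * g t) U :=
  hw.mul <| contDiffOn_two_of_hasDerivAt hU hg <|
    ((hw.of_le (by norm_num)).pow 2).inv fun t ht => pow_ne_zero 2 (hw_ne t ht)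

/-- Since `g' = w⁻²`, `(w g)' = w' g + w⁻¹`, and the two terms `± w' w⁻²` cancel in `(w g)''`. -/
theorem deriv_deriv_mul_of_hasDerivAt_inv_sq (hU : IsOpen U) (hw : ContDiffOn ℝ 2 w U)
    (hw_ne : ∀ t ∈ U, w t ≠ 0) (hg : ∀ t ∈ U, HasDerivAt g (w t ^ 2)⁻¹ t) {t : ℝ}
    (ht : t ∈ U) : deriv (deriv fun t => w t * g t) t = deriv (deriv w) t * g t := by
  have hw' : ∀ u ∈ U, HasDerivAt w (deriv w u) u := fun u hu =>
    ((hw.differentiableOn (by norm_num)).differentiableAt (hU.mem_nhds hu)).hasDerivAt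
  have hw'' : HasDerivAt (deriv w) (deriv (deriv w) t) t :=
    ((((contDiffOn_succ_iff_deriv_of_isOpen (n := 1) hU).1 hw).2.2.differentiableOn
      (by norm_num)).differentiableAt (hU.mem_nhds ht)).hasDerivAt
  have hderiv : deriv (fun t => w t * g t) =ᶠ[𝓝 t] fun u => deriv w u * g u + (w u)⁻¹ := by
    filter_upwards [hU.mem_nhds ht] with u hu
    rw [((hw' u hu).fun_mul (hg u hu)).deriv]
    field_simp [hw_ne u hu]
  rw [hderiv.deriv_eq,
    ((hw''.fun_mul (hg t ht)).fun_add ((hw' t ht).fun_inv (hw_ne t ht))).deriv]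
  field_simp [hw_ne t ht]
  ring

end ReductionOfOrder

theorem exists_ne_of_strictMonoOn_Iio {g : ℝ → ℝ} {t0 : ℝ} (hg : StrictMonoOn g (Iio t0))
    (a : ℝ) : ∃ t < t0, g t ≠ a := by
  by_contra! h
  have hlt := hg (show t0 - 2 < t0 by linarith) (show t0 - 1 < t0 by linarith) (by linarith)
  rw [h _ (by linarith), h _ (by linarith)] at hlt
  exact hlt.false

theorem not_proportional_mul_of_forall_exists_ne {w g : ℝ → ℝ} {t0 : ℝ}
    (hw : ∀ t < t0, w t ≠ 0) (hg : ∀ a, ∃ t < t0, g t ≠ a) :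
    (∀ a, ∃ t < t0, w t * g t ≠ a * w t) ∧ (∀ a, ∃ t < t0, w t ≠ a * (w t * g t)) := by
  constructor
  · intro a
    obtain ⟨t, ht, hgt⟩ := hg a
    exact ⟨t, ht, fun h => hgt (mul_left_cancel₀ (hw t ht) (h.trans (mul_comm a (w t))))⟩
  · intro a
    obtain ⟨t, ht, hgt⟩ := hg a⁻¹
    refine ⟨t, ht, fun h => hgt ?_⟩
    have ha : a * g t = 1 := mul_left_cancel₀ (hw t ht) (by linear_combination -h)
    exact eq_inv_of_mul_eq_one_right ha

theorem stmt17_general (lam t0 : ℝ) (hlam : 0 < lam)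
    (V w1 : ℝ → ℝ)
    (hw1 : ContDiffOn ℝ 2 w1 (Set.Iio t0))
    (hw1pos : ∀ t < t0, 0 < w1 t)
    (hode : ∀ t < t0, deriv (deriv w1) t + V t * w1 t = 0)
    (hlim : Filter.Tendsto (fun t => w1 t * Real.exp (lam * t)) Filter.atBot (nhds 1)) :
    (∀ t < t0, MeasureTheory.IntegrableOn (fun s => (w1 s ^ 2)⁻¹) (Set.Iic t)) ∧
    ContDiffOn ℝ 2 (fun t => w1 t * ∫ s in Set.Iic t, (w1 s ^ 2)⁻¹) (Set.Iio t0) ∧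
    (∀ t < t0,
      deriv (deriv (fun t => w1 t * ∫ s in Set.Iic t, (w1 s ^ 2)⁻¹)) t
        + V t * (w1 t * ∫ s in Set.Iic t, (w1 s ^ 2)⁻¹) = 0) ∧
    (∀ a : ℝ, ∃ t < t0, w1 t * (∫ s in Set.Iic t, (w1 s ^ 2)⁻¹) ≠ a * w1 t) ∧
    (∀ a : ℝ, ∃ t < t0, w1 t ≠ a * (w1 t * ∫ s in Set.Iic t, (w1 s ^ 2)⁻¹)) ∧
    Filter.Tendsto
      (fun t => (w1 t * ∫ s in Set.Iic t, (w1 s ^ 2)⁻¹) * Real.exp (-lam * t))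
      Filter.atBot (nhds (1 / (2 * lam))) := by
  set g : ℝ → ℝ := fun t => ∫ s in Iic t, (w1 s ^ 2)⁻¹
  have hw1_ne : ∀ t < t0, w1 t ≠ 0 := fun t ht => (hw1pos t ht).ne'
  have hf_cont : ContinuousOn (fun s => (w1 s ^ 2)⁻¹) (Iio t0) :=
    (hw1.continuousOn.pow 2).inv₀ fun t ht => pow_ne_zero 2 (hw1_ne t ht)
  have hf_int : ∀ t < t0, IntegrableOn (fun s => (w1 s ^ 2)⁻¹) (Iic t) := fun t ht =>
    integrableOn_Iic_inv_sq hlam (hw1.continuousOn.mono (Iic_subset_Iio.2 ht))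
      (fun s hs => hw1_ne s (hs.trans_lt ht)) hlim
  have hg : ∀ t ∈ Iio t0, HasDerivAt g (w1 t ^ 2)⁻¹ t := fun t ht =>
    have ⟨b, htb, hb⟩ := exists_between ht
    hasDerivAt_setIntegral_Iic htb (hf_int b hb) (hf_cont.continuousAt (Iio_mem_nhds ht))
  have hg_mono : StrictMonoOn g (Iio t0) := by
    refine strictMonoOn_of_deriv_pos (convex_Iio t0)
      (fun t ht => (hg t ht).continuousAt.continuousWithinAt) fun t ht => ?_
    rw [interior_Iio] at ht
    rw [(hg t ht).deriv]
    exact inv_pos.2 (pow_pos (hw1pos t ht) 2)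
  obtain ⟨hindep₁, hindep₂⟩ :=
    not_proportional_mul_of_forall_exists_ne hw1_ne (exists_ne_of_strictMonoOn_Iio hg_mono)
  refine ⟨hf_int, contDiffOn_mul_of_hasDerivAt_inv_sq isOpen_Iio hw1 hw1_ne hg, fun t ht => ?_,
    hindep₁, hindep₂, tendsto_mul_setIntegral_inv_sq_mul_exp hlam ?_ hlim⟩
  · rw [deriv_deriv_mul_of_hasDerivAt_inv_sq isOpen_Iio hw1 hw1_ne hg ht]
    linear_combination g t * hode t ht
  · filter_upwards [eventually_lt_atBot t0] using hf_int

/-- reduction of order: from a positive solution `w₁` of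
`w'' + V w = 0` with `w₁(t) e^{λ t} → 1` at `-∞`, the function
`w₂(t) = w₁(t) ∫_{-∞}^t w₁(s)⁻² ds` is a second, linearly independent
solution with `w₂(t) e^{-λ t} → 1/(2λ)`. -/
theorem stmt17 (lam t0 : ℝ) (hlam : 0 < lam)
    (V w1 : ℝ → ℝ) (hV : ContinuousOn V (Set.Iio t0))
    (hw1 : ContDiffOn ℝ 2 w1 (Set.Iio t0))
    (hw1pos : ∀ t < t0, 0 < w1 t)
    (hode : ∀ t < t0, deriv (deriv w1) t + V t * w1 t = 0)
    (hlim : Filter.Tendsto (fun t => w1 t * Real.exp (lam * t)) Filter.atBot (nhds 1)) :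
    (∀ t < t0, MeasureTheory.IntegrableOn (fun s => (w1 s ^ 2)⁻¹) (Set.Iic t)) ∧
    ContDiffOn ℝ 2 (fun t => w1 t * ∫ s in Set.Iic t, (w1 s ^ 2)⁻¹) (Set.Iio t0) ∧
    (∀ t < t0,
      deriv (deriv (fun t => w1 t * ∫ s in Set.Iic t, (w1 s ^ 2)⁻¹)) t
        + V t * (w1 t * ∫ s in Set.Iic t, (w1 s ^ 2)⁻¹) = 0) ∧
    (∀ a : ℝ, ∃ t < t0, w1 t * (∫ s in Set.Iic t, (w1 s ^ 2)⁻¹) ≠ a * w1 t) ∧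
    (∀ a : ℝ, ∃ t < t0, w1 t ≠ a * (w1 t * ∫ s in Set.Iic t, (w1 s ^ 2)⁻¹)) ∧
    Filter.Tendsto
      (fun t => (w1 t * ∫ s in Set.Iic t, (w1 s ^ 2)⁻¹) * Real.exp (-lam * t))
      Filter.atBot (nhds (1 / (2 * lam))) :=
  stmt17_general lam t0 hlam V w1 hw1 hw1pos hode hlim
end
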